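/- arXiv:2307.12787 — 8 statements merged into one kernel-verified Lean document; each statement's English description precedes it below -/
import Mathlib

section
/- Let X be a compactum and let f ∈ DX. Then the functional nX(f) : C(X) → ℝ defined by nX(f)(φ) = max{f(x) + φ(x) : x ∈ X} is well defined (the maximum is attained and finite) and is an idempotent measure on X, i.e. nX(f) ∈ IX. -/
/-!
`f + φ` is upper semicontinuous on a compact space, so its maximum is attained. Since `f ≤ 0`
and `f x₁ = 0`, the supremum `⨆ x, f x + φ x` lies between `φ x₁` and `‖φ‖`, hence is real, and
the laws of an idempotent measure can be checked in `EReal`: adding a real constant commutes with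
`⨆`, addition distributes over `max`, and `⨆ x, f x = 0` gives the value at constants.
-/

/-- An idempotent (Maslov) probability measure on `X`:
a functional on `C(X, ℝ)` preserving constants, translation by constants,
and finite maxima. -/
def IsIdempotentMeasure {X : Type*} [TopologicalSpace X] (μ : C(X, ℝ) → ℝ) : Prop :=
  μ 1 = 1 ∧
  (∀ (l : ℝ) (φ : C(X, ℝ)), μ (ContinuousMap.const X l + φ) = l + μ φ) ∧
  (∀ ψ φ : C(X, ℝ), μ (ψ ⊔ φ) = max (μ ψ) (μ φ))
/-- Membership in `DX`: an upper semicontinuous function `X → [-∞, 0]`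
attaining the maximal value `0`. -/
def MemD {X : Type*} [TopologicalSpace X] (f : X → EReal) : Prop :=
  UpperSemicontinuous f ∧ (∀ x, f x ≤ 0) ∧ ∃ x, f x = 0

namespace EReal

lemma iSup_add_coe {ι : Sort*} (u : ι → EReal) (c : ℝ) :
    ⨆ i, (u i + c) = (⨆ i, u i) + c :=
  ((monotone_id.add_const _).map_iSup_of_continuousAt
    ((continuousAt_add (.inr (coe_ne_bot c)) (.inr (coe_ne_top c))).comp
      (continuousAt_id.prodMk continuousAt_const)) (bot_add _)).symm

lemma toReal_max {a b : EReal} (ha : a ≠ ⊤) (ha' : a ≠ ⊥) (hb : b ≠ ⊤) (hb' : b ≠ ⊥) :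
    (max a b).toReal = max a.toReal b.toReal := by
  lift a to ℝ using ⟨ha, ha'⟩
  lift b to ℝ using ⟨hb, hb'⟩
  rw [← coe_strictMono.monotone.map_max, toReal_coe, toReal_coe, toReal_coe]

end EReal

lemma UpperSemicontinuous.exists_forall_add_le {X : Type*} [TopologicalSpace X] [CompactSpace X]
    [Nonempty X] {f : X → EReal} (hf : UpperSemicontinuous f) (φ : C(X, ℝ)) :
    ∃ x₀, ∀ x, f x + φ x ≤ f x₀ + φ x₀ := by
  have hsum : UpperSemicontinuous fun x => f x + φ x :=
    hf.add' (EReal.continuous_coe_iff.2 φ.continuous).upperSemicontinuous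
      fun x => EReal.continuousAt_add (.inr (EReal.coe_ne_bot _)) (.inr (EReal.coe_ne_top _))
  obtain ⟨x₀, -, hx₀⟩ :=
    (hsum.upperSemicontinuousOn _).exists_isMaxOn Set.univ_nonempty isCompact_univ
  exact ⟨x₀, fun x => hx₀ (Set.mem_univ x)⟩

section SupAdd

open ContinuousMap

variable {X : Type*} [TopologicalSpace X] {f : X → EReal}

/-- The paper's `nX(f)`, before passing to real values. -/
noncomputable def supAdd (f : X → EReal) (φ : C(X, ℝ)) : EReal :=
  ⨆ x, f x + φ x

lemma supAdd_const_add (l : ℝ) (φ : C(X, ℝ)) : supAdd f (const X l + φ) = l + supAdd f φ := by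
  simp only [supAdd, ContinuousMap.add_apply, const_apply, EReal.coe_add, add_comm (l : EReal), ← add_assoc,
    EReal.iSup_add_coe]

lemma supAdd_sup (ψ φ : C(X, ℝ)) : supAdd f (ψ ⊔ φ) = max (supAdd f ψ) (supAdd f φ) := by
  simp only [supAdd, ContinuousMap.sup_apply, EReal.coe_strictMono.monotone.map_max, add_max]
  exact iSup_sup_eq

lemma supAdd_const (hf : ⨆ x, f x = 0) (c : ℝ) : supAdd f (const X c) = c := by
  simp only [supAdd, const_apply, EReal.iSup_add_coe, hf, zero_add]

lemma supAdd_ne_bot {x₁ : X} (hx₁ : f x₁ ≠ ⊥) (φ : C(X, ℝ)) : supAdd f φ ≠ ⊥ :=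
  ne_bot_of_le_ne_bot (EReal.add_ne_bot_iff.2 ⟨hx₁, EReal.coe_ne_bot _⟩)
    (le_iSup (fun x => f x + φ x) x₁)

lemma supAdd_ne_top [CompactSpace X] (hf : ∀ x, f x ≤ 0) (φ : C(X, ℝ)) : supAdd f φ ≠ ⊤ :=
  ne_top_of_le_ne_top (EReal.coe_ne_top ‖φ‖) <| iSup_le fun x =>
    calc f x + φ x ≤ 0 + φ x := by gcongr; exact hf x
      _ ≤ ‖φ‖ := by rw [zero_add]; exact EReal.coe_le_coe_iff.2 (φ.apply_le_norm x)

end SupAdd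

theorem stmt0_general {X : Type*} [TopologicalSpace X] [CompactSpace X]
    (f : X → EReal) (hf : MemD f) :
    (∀ φ : C(X, ℝ), ∃ x₀ : X,
        (∀ x, f x + (φ x : EReal) ≤ f x₀ + (φ x₀ : EReal)) ∧
        f x₀ + (φ x₀ : EReal) ≠ ⊥) ∧
    IsIdempotentMeasure (fun φ : C(X, ℝ) => (⨆ x, f x + (φ x : EReal)).toReal) := by
  obtain ⟨husc, hle, x₁, hx₁⟩ := hf
  have : Nonempty X := ⟨x₁⟩
  have hx₁_ne_bot : f x₁ ≠ ⊥ := hx₁ ▸ EReal.zero_ne_bot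
  have hsup : ⨆ x, f x = 0 := le_antisymm (iSup_le hle) (le_iSup_of_le x₁ hx₁.ge)
  refine ⟨fun φ => ?_, ?_⟩
  · obtain ⟨x₀, hx₀⟩ := husc.exists_forall_add_le φ
    exact ⟨x₀, hx₀,
      ne_bot_of_le_ne_bot (EReal.add_ne_bot_iff.2 ⟨hx₁_ne_bot, EReal.coe_ne_bot _⟩) (hx₀ x₁)⟩
  change IsIdempotentMeasure fun φ => (supAdd f φ).toReal
  refine ⟨by simp [← ContinuousMap.const_one, supAdd_const hsup], fun l φ => ?_, fun ψ φ => ?_⟩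
    <;> dsimp only
  · rw [supAdd_const_add, EReal.toReal_add (EReal.coe_ne_top l) (EReal.coe_ne_bot l)
      (supAdd_ne_top hle φ) (supAdd_ne_bot hx₁_ne_bot φ), EReal.toReal_coe]
  · rw [supAdd_sup, EReal.toReal_max (supAdd_ne_top hle ψ) (supAdd_ne_bot hx₁_ne_bot ψ)
      (supAdd_ne_top hle φ) (supAdd_ne_bot hx₁_ne_bot φ)]

/-- For a compactum `X` and `f ∈ DX`, the functional
`nX(f)(φ) = max{f(x) + φ(x) : x ∈ X}` is well defined (the maximum is attained and
finite) and is an idempotent measure on `X`. -/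
theorem stmt0 {X : Type*} [TopologicalSpace X] [CompactSpace X] [T2Space X]
    (f : X → EReal) (hf : MemD f) :
    (∀ φ : C(X, ℝ), ∃ x₀ : X,
        (∀ x, f x + (φ x : EReal) ≤ f x₀ + (φ x₀ : EReal)) ∧
        f x₀ + (φ x₀ : EReal) ≠ ⊥) ∧
    IsIdempotentMeasure (fun φ : C(X, ℝ) => (⨆ x, f x + (φ x : EReal)).toReal) :=
  stmt0_general f hf
end

section
/- Let X be a compactum and let μ be an idempotent measure on X. Then the function sX(μ) : X → [-∞,0] defined by sX(μ)(x) = inf{μ(φ) : φ ∈ C(X, (-∞,0]) with φ(x) = 0} is upper semicontinuous and attains the maximal value 0, i.e. sX(μ) ∈ DX. -/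
/-- The density `sX(μ)` of a functional `μ`:
`sX(μ)(x) = inf { μ(φ) : φ ∈ C(X,(-∞,0]), φ(x) = 0 }`, computed in `ℝ ∪ {-∞}`. -/
noncomputable def sFun {X : Type*} [TopologicalSpace X] (μ : C(X, ℝ) → ℝ) (x : X) : EReal :=
  ⨅ φ : {φ : C(X, ℝ) // (∀ y, φ y ≤ 0) ∧ φ x = 0}, ((μ φ.1 : ℝ) : EReal)

section Aux

variable {X : Type*} [TopologicalSpace X] {μ : C(X, ℝ) → ℝ}

lemma mu_zero (hμ : IsIdempotentMeasure μ) : μ 0 = 0 := by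
  have h := hμ.2.1 1 0
  have e : ContinuousMap.const X (1 : ℝ) + 0 = 1 := by ext x; simp
  rw [e, hμ.1] at h
  linarith

lemma mu_const (hμ : IsIdempotentMeasure μ) (c : ℝ) :
    μ (ContinuousMap.const X c) = c := by
  have h := hμ.2.1 c 0
  simpa [mu_zero hμ] using h

lemma mu_mono (hμ : IsIdempotentMeasure μ) {ψ φ : C(X, ℝ)} (h : ψ ≤ φ) : μ ψ ≤ μ φ := by
  have h2 := hμ.2.2 ψ φ
  rw [sup_eq_right.mpr h] at h2
  rw [h2]
  exact le_max_left _ _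

end Aux

/-- For a compactum `X` and an idempotent measure `μ` on `X`, the
function `sX(μ)(x) = inf{μ(φ) : φ ∈ C(X,(-∞,0]), φ(x) = 0}` is upper semicontinuous,
takes values in `[-∞,0]`, and attains the maximal value `0`, i.e. `sX(μ) ∈ DX`. -/
theorem stmt1 {X : Type*} [TopologicalSpace X] [CompactSpace X] [T2Space X]
    (μ : C(X, ℝ) → ℝ) (hμ : IsIdempotentMeasure μ) :
    MemD (sFun μ) := by
  have hX : Nonempty X := by
    by_contra h
    rw [not_nonempty_iff] at h
    have e : ContinuousMap.const X (1 : ℝ) + 1 = 1 := by ext x; exact (h.false x).elim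
    have h2 := hμ.2.1 1 1
    rw [e, hμ.1] at h2
    linarith
  haveI := hX
  have hle : ∀ x, sFun μ x ≤ 0 := by
    intro x
    have h0 : sFun μ x ≤ ((μ 0 : ℝ) : EReal) := by
      rw [sFun]; exact iInf_le _ (⟨0, fun y => le_refl 0, rfl⟩ : {φ : C(X, ℝ) // (∀ y, φ y ≤ 0) ∧ φ x = 0})
    rw [mu_zero hμ] at h0
    simpa using h0
  refine ⟨?_, hle, ?_⟩
  · -- upper semicontinuity
    intro x y hy
    rw [sFun, iInf_lt_iff] at hy
    obtain ⟨⟨φ, hφ0, hφx⟩, hφlt⟩ := hy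
    have cont : Continuous fun x' : X => ((μ φ - φ x' : ℝ) : EReal) :=
      continuous_coe_real_ereal.comp (continuous_const.sub φ.continuous)
    have hev : ∀ᶠ x' in nhds x, ((μ φ - φ x' : ℝ) : EReal) < y := by
      refine (cont.continuousAt).eventually_lt continuousAt_const ?_
      simpa [hφx] using hφlt
    filter_upwards [hev] with x' hx'
    refine lt_of_le_of_lt ?_ hx'
    set ψ : C(X, ℝ) := (ContinuousMap.const X (-(φ x')) + φ) ⊓ 0 with hψdef
    have hψ0 : ∀ z, ψ z ≤ 0 := fun z => by simp [hψdef]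
    have hψx : ψ x' = 0 := by simp [hψdef]
    have hψμ : μ ψ ≤ μ φ - φ x' := by
      have hle2 : ψ ≤ ContinuousMap.const X (-(φ x')) + φ := inf_le_left
      have := mu_mono hμ hle2
      rw [hμ.2.1] at this
      linarith
    calc sFun μ x' ≤ ((μ ψ : ℝ) : EReal) := by
          rw [sFun]; exact iInf_le _ (⟨ψ, hψ0, hψx⟩ : {φ : C(X, ℝ) // (∀ y, φ y ≤ 0) ∧ φ x' = 0})
      _ ≤ ((μ φ - φ x' : ℝ) : EReal) := EReal.coe_le_coe_iff.mpr hψμ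
  · -- attains 0
    by_contra hns
    push_neg at hns
    have hlt : ∀ x, ∃ φ : C(X, ℝ), (∀ y, φ y ≤ 0) ∧ φ x = 0 ∧ μ φ < 0 := by
      intro x
      have hx : sFun μ x < 0 := (hle x).lt_of_ne (hns x)
      rw [sFun, iInf_lt_iff] at hx
      obtain ⟨⟨φ, hφ0, hφx⟩, h⟩ := hx
      exact ⟨φ, hφ0, hφx, by exact_mod_cast h⟩
    choose φ hφ1 hφ2 hφ3 using hlt
    set U : X → Set X := fun x => {y | μ (φ x) / 2 < φ x y} with hU
    have hUopen : ∀ x, IsOpen (U x) := fun x =>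
      isOpen_lt continuous_const (φ x).continuous
    have hUmem : ∀ x, x ∈ U x := by
      intro x
      have := hφ3 x
      simp only [hU, Set.mem_setOf_eq, hφ2 x]
      linarith
    obtain ⟨s, hs⟩ := isCompact_univ.elim_finite_subcover U hUopen
      (fun y _ => Set.mem_iUnion.mpr ⟨y, hUmem y⟩)
    have hsne : s.Nonempty := by
      obtain ⟨x₀⟩ := hX
      obtain ⟨i, hi, _⟩ := Set.mem_iUnion₂.mp (hs (Set.mem_univ x₀))
      exact ⟨i, hi⟩
    set g : X → C(X, ℝ) := fun i => ContinuousMap.const X (-(μ (φ i) / 2)) + φ i with hg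
    set Ψ : C(X, ℝ) := s.sup' hsne g with hΨ
    have hμg : ∀ i, μ (g i) = μ (φ i) / 2 := by
      intro i; rw [hg]; simp only []; rw [hμ.2.1]; ring
    have hμΨ : μ Ψ = s.sup' hsne fun i => μ (g i) :=
      map_finset_sup' (SupHom.mk μ hμ.2.2) hsne g
    have hΨneg : μ Ψ < 0 := by
      rw [hμΨ, Finset.sup'_lt_iff]
      intro i _
      rw [hμg i]
      linarith [hφ3 i]
    have hΨpos : ∀ y, 0 < Ψ y := by
      intro y
      obtain ⟨i, hi, hy⟩ := Set.mem_iUnion₂.mp (hs (Set.mem_univ y))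
      have hgi : 0 < g i y := by
        have : μ (φ i) / 2 < φ i y := hy
        simp only [hg, ContinuousMap.add_apply, ContinuousMap.const_apply]
        linarith
      have hle3 : g i ≤ Ψ := Finset.le_sup' g hi
      exact lt_of_lt_of_le hgi (hle3 y)
    obtain ⟨y₀, -, hy₀⟩ := isCompact_univ.exists_isMinOn Set.univ_nonempty
      Ψ.continuous.continuousOn
    have hm : ContinuousMap.const X (Ψ y₀) ≤ Ψ := by
      intro y
      exact hy₀ (Set.mem_univ y)
    have hμm := mu_mono hμ hm
    rw [mu_const hμ] at hμm
    linarith [hΨpos y₀]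
end

section
/- Let X be a compactum. The maps nX : DX → IX and sX : IX → DX are mutually inverse bijections: nX ∘ sX = id on IX and sX ∘ nX = id on DX. -/
/-!
For an idempotent measure `μ`, the inequality `sX(μ)(x) + φ(x) ≤ μ(φ)` follows from monotonicity
and translation invariance. Conversely, if `sX(μ)(x) + φ(x) < r` for all `x`, each `x` has a test
function `ψₓ ≤ 0`, `ψₓ(x) = 0`, with `μ(ψₓ) + φ(x) < r`; translating `ψₓ` so that its `μ`-value is
`r` yields a function lying strictly above `φ` near `x`, and the finite maximum of such functions
over a subcover dominates `φ`, whence `μ(φ) ≤ r`.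

For `f ∈ DX`, `sX(nX(f))(x) ≥ f(x)` is immediate. For the reverse, given `r > f(x)`, upper
semicontinuity makes `{f ≥ r}` a closed set missing `x`, and an Urysohn function which vanishes
at `x` and equals `min r 0` on `{f ≥ r}` is a test function with `nX(f)(ψ) ≤ r`.
-/

open Set

namespace IsIdempotentMeasure

variable {X : Type*} [TopologicalSpace X] {μ : C(X, ℝ) → ℝ}

theorem map_const_add (hμ : IsIdempotentMeasure μ) (l : ℝ) (φ : C(X, ℝ)) :
    μ (ContinuousMap.const X l + φ) = l + μ φ :=
  hμ.2.1 l φ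

theorem map_sup (hμ : IsIdempotentMeasure μ) (ψ φ : C(X, ℝ)) : μ (ψ ⊔ φ) = μ ψ ⊔ μ φ :=
  hμ.2.2 ψ φ

theorem monotone (hμ : IsIdempotentMeasure μ) : Monotone μ := fun ψ φ h => by
  simpa [sup_eq_right.mpr h] using hμ.map_sup ψ φ

theorem map_finset_sup' (hμ : IsIdempotentMeasure μ) {ι : Type*} {t : Finset ι}
    (ht : t.Nonempty) (g : ι → C(X, ℝ)) : μ (t.sup' ht g) = t.sup' ht (μ ∘ g) :=
  Finset.apply_sup'_eq_sup'_comp ht μ hμ.map_sup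

theorem nonempty (hμ : IsIdempotentMeasure μ) : Nonempty X := by
  by_contra hX
  rw [not_nonempty_iff] at hX
  have h := hμ.map_const_add 1 0
  rw [Subsingleton.elim (ContinuousMap.const X 1 + 0) 0] at h
  linarith

theorem le_of_forall_lt_apply [CompactSpace X] [Nonempty X] (hμ : IsIdempotentMeasure μ)
    {φ : C(X, ℝ)} {r : ℝ} (g : X → C(X, ℝ)) (hφg : ∀ x, φ x < g x x) (hgr : ∀ x, μ (g x) ≤ r) :
    μ φ ≤ r := by
  obtain ⟨t, ht⟩ := CompactSpace.elim_nhds_subcover (fun x => {y | φ y < g x y}) fun x =>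
    (isOpen_lt φ.continuous (g x).continuous).mem_nhds (hφg x)
  have hcover (y : X) : ∃ x ∈ t, φ y < g x y := by
    simpa using (Set.ext_iff.mp ht y).mpr trivial
  have htne : t.Nonempty := by
    obtain ⟨x, hx, -⟩ := hcover (Classical.arbitrary X)
    exact ⟨x, hx⟩
  have hφ : φ ≤ t.sup' htne g := ContinuousMap.le_def.mpr fun y => by
    obtain ⟨x, hx, hxy⟩ := hcover y
    rw [ContinuousMap.sup'_apply]
    exact hxy.le.trans (Finset.le_sup' (fun i => g i y) hx)
  calc μ φ ≤ μ (t.sup' htne g) := hμ.monotone hφ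
    _ = t.sup' htne (μ ∘ g) := hμ.map_finset_sup' htne g
    _ ≤ r := Finset.sup'_le htne _ fun x _ => hgr x

theorem sFun_add_le (hμ : IsIdempotentMeasure μ) (φ : C(X, ℝ)) (x : X) :
    sFun μ x + φ x ≤ μ φ := by
  set ψ : C(X, ℝ) := (ContinuousMap.const X (-φ x) + φ) ⊓ 0
  have hψ : μ ψ ≤ -φ x + μ φ := hμ.map_const_add (-φ x) φ ▸ hμ.monotone inf_le_left
  have hsψ : sFun μ x ≤ μ ψ := iInf_le_of_le ⟨ψ, fun y => by simp [ψ], by simp [ψ]⟩ le_rfl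
  calc sFun μ x + φ x ≤ ((μ ψ + φ x : ℝ) : EReal) := by
        rw [EReal.coe_add]; gcongr
    _ ≤ μ φ := by exact_mod_cast (by linarith : μ ψ + φ x ≤ μ φ)

theorem le_iSup_sFun_add [CompactSpace X] (hμ : IsIdempotentMeasure μ) (φ : C(X, ℝ)) :
    (μ φ : EReal) ≤ ⨆ x, sFun μ x + φ x := by
  have := hμ.nonempty
  refine EReal.le_of_forall_lt_iff_le.mp fun r hr => ?_
  have hψ (x : X) : ∃ ψ : C(X, ℝ), ((∀ y, ψ y ≤ 0) ∧ ψ x = 0) ∧ μ ψ + φ x < r := by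
    have hx : sFun μ x < ((r - φ x : ℝ) : EReal) := by
      rw [EReal.coe_sub]
      exact EReal.lt_sub_iff_add_lt (.inl (EReal.coe_ne_bot _)) (.inl (EReal.coe_ne_top _)) |>.mpr
        ((le_iSup (fun x => sFun μ x + φ x) x).trans_lt hr)
    obtain ⟨⟨ψ, hψ⟩, hμψ⟩ := iInf_lt_iff.mp hx
    exact ⟨ψ, hψ, by linarith [EReal.coe_lt_coe_iff.mp hμψ]⟩
  choose ψ hψ hμψ using hψ
  refine EReal.coe_le_coe_iff.mpr <| hμ.le_of_forall_lt_apply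
    (fun x => ContinuousMap.const X (r - μ (ψ x)) + ψ x) (fun x => ?_) (fun x => ?_)
  · simp [(hψ x).2]
    linarith [hμψ x]
  · rw [hμ.map_const_add]
    linarith

theorem coe_eq_iSup_sFun_add [CompactSpace X] (hμ : IsIdempotentMeasure μ) (φ : C(X, ℝ)) :
    (μ φ : EReal) = ⨆ x, sFun μ x + φ x :=
  le_antisymm (hμ.le_iSup_sFun_add φ) (iSup_le fun x => hμ.sFun_add_le φ x)

end IsIdempotentMeasure

section Density

variable {X : Type*} [TopologicalSpace X] {f : X → EReal}

theorem coe_toReal_iSup_add [CompactSpace X] (hf : ∀ x, f x ≤ 0) {x₀ : X} (hx₀ : f x₀ = 0)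
    (φ : C(X, ℝ)) : ((⨆ y, f y + φ y).toReal : EReal) = ⨆ y, f y + φ y := by
  refine EReal.coe_toReal (ne_top_of_le_ne_top (EReal.coe_ne_top ‖φ‖) (iSup_le fun y => ?_)) ?_
  · calc f y + φ y ≤ 0 + ((‖φ‖ : ℝ) : EReal) := by
          gcongr
          · exact hf y
          · exact_mod_cast (le_abs_self _).trans (φ.norm_coe_le_norm y)
      _ = ‖φ‖ := zero_add _
  · refine ne_bot_of_le_ne_bot (EReal.coe_ne_bot (φ x₀)) ?_
    simpa [hx₀] using le_iSup (fun y => f y + φ y) x₀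

theorem UpperSemicontinuous.exists_nonpos_add_le [NormalSpace X] [T1Space X]
    (hf : UpperSemicontinuous f) (hf0 : ∀ y, f y ≤ 0) {x : X} {r : ℝ} (hr : f x < r) :
    ∃ ψ : C(X, ℝ), ((∀ y, ψ y ≤ 0) ∧ ψ x = 0) ∧ ∀ y, f y + ψ y ≤ r := by
  have hclosed : IsClosed (f ⁻¹' Ici (r : EReal)) := by
    simpa only [← compl_Iio, preimage_compl, isClosed_compl_iff] using
      upperSemicontinuous_iff_isOpen_preimage.mp hf r
  obtain ⟨g, hgx, hg1, hg01⟩ := exists_continuous_zero_one_of_isClosed isClosed_singleton hclosed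
    (disjoint_singleton_left.mpr (not_le.mpr hr))
  refine ⟨min r 0 • g, ⟨fun y => ?_, ?_⟩, fun y => ?_⟩
  · exact mul_nonpos_of_nonpos_of_nonneg (min_le_right r 0) (hg01 y).1
  · simp [hgx (mem_singleton x)]
  · by_cases hy : f y < r
    · calc f y + ((min r 0 • g) y : ℝ) ≤ f y + 0 := by
            gcongr
            exact_mod_cast mul_nonpos_of_nonpos_of_nonneg (min_le_right r 0) (hg01 y).1
        _ ≤ r := by rw [add_zero]; exact hy.le
    · have hgy : g y = 1 := hg1 (not_lt.mp hy)
      calc f y + ((min r 0 • g) y : ℝ) ≤ 0 + ((min r 0 : ℝ) : EReal) := by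
            gcongr
            · exact hf0 y
            · simp [hgy]
        _ ≤ r := by rw [zero_add]; exact_mod_cast min_le_left r 0

theorem sFun_eq_of_coe_eq_iSup_add [NormalSpace X] [T1Space X] {μ : C(X, ℝ) → ℝ}
    (hf : UpperSemicontinuous f) (hf0 : ∀ y, f y ≤ 0)
    (hμ : ∀ φ, (μ φ : EReal) = ⨆ y, f y + φ y) (x : X) : sFun μ x = f x := by
  refine le_antisymm (EReal.le_of_forall_lt_iff_le.mp fun r hr => ?_) (le_iInf fun ψ => ?_)
  · obtain ⟨ψ, hψ, hψr⟩ := hf.exists_nonpos_add_le hf0 hr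
    exact iInf_le_of_le ⟨ψ, hψ⟩ ((hμ ψ).trans_le (iSup_le hψr))
  · simpa [hμ, ψ.2.2] using le_iSup (fun y => f y + ψ.1 y) x

end Density

/-- For a compactum `X`, the maps `nX : DX → IX` and `sX : IX → DX`
are mutually inverse: `nX ∘ sX = id` on `IX` and `sX ∘ nX = id` on `DX`. -/
theorem stmt2 {X : Type*} [TopologicalSpace X] [CompactSpace X] [T2Space X] :
    (∀ μ : C(X, ℝ) → ℝ, IsIdempotentMeasure μ →
        ∀ φ : C(X, ℝ), ((μ φ : ℝ) : EReal) = ⨆ x, sFun μ x + (φ x : EReal)) ∧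
    (∀ f : X → EReal, MemD f →
        ∀ x : X, sFun (fun φ : C(X, ℝ) => (⨆ y, f y + (φ y : EReal)).toReal) x = f x) := by
  refine ⟨fun μ hμ φ => hμ.coe_eq_iSup_sFun_add φ, ?_⟩
  rintro f ⟨hf, hf0, x₀, hx₀⟩
  exact sFun_eq_of_coe_eq_iSup_add hf hf0 (coe_toReal_iSup_add hf0 hx₀)
end

section
/- Let g : X → Y be a continuous map of compacta. For every f ∈ DX, the function Dg(f) : Y → [-∞,0] defined by Dg(f)(y) = max f(g⁻¹(y)) (with max ∅ = -∞) belongs to DY, and the resulting map Dg : DX → DY is continuous. -/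
/-- The space `DX` of densities. -/
structure Dspace (X : Type*) [TopologicalSpace X] where
  toFun : X → EReal
  memD : MemD toFun

/-- The topology on `DX` generated by the subbase of sets
`S₋(A,t) = {f : f(a) < t for all a ∈ A}` (`A` closed, `t ∈ [-∞,0]`) and
`S₊(U,t) = {f : f(a) > t for some a ∈ U}` (`U` open, `t ∈ [-∞,0]`). -/
instance (X : Type*) [TopologicalSpace X] : TopologicalSpace (Dspace X) :=
  TopologicalSpace.generateFrom
    ({S | ∃ (A : Set X) (t : EReal), IsClosed A ∧ t ≤ 0 ∧
        S = {f : Dspace X | ∀ a ∈ A, f.toFun a < t}} ∪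
     {S | ∃ (U : Set X) (t : EReal), IsOpen U ∧ t ≤ 0 ∧
        S = {f : Dspace X | ∃ a ∈ U, t < f.toFun a}})
/-- `Dg(f)(y) = max f(g⁻¹(y))`, with the convention `max ∅ = -∞`. -/
noncomputable def Dmap {X Y : Type*} (g : X → Y) (f : X → EReal) : Y → EReal :=
  fun y => ⨆ x ∈ g ⁻¹' {y}, f x

section AuxStmt6
open Set

lemma usc_exists_max {X : Type*} [TopologicalSpace X] [T2Space X] {f : X → EReal}
    (hf : UpperSemicontinuous f) {K : Set X} (hK : IsCompact K) (hne : K.Nonempty) :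
    ∃ x₀ ∈ K, ∀ x ∈ K, f x ≤ f x₀ := by
  set s : EReal := ⨆ x ∈ K, f x with hs
  have hle : ∀ x ∈ K, f x ≤ s := fun x hx => le_biSup f hx
  rcases eq_or_lt_of_le (bot_le : (⊥ : EReal) ≤ s) with hbot | hbot
  · obtain ⟨x₀, hx₀⟩ := hne
    exact ⟨x₀, hx₀, fun x hx => le_trans (hle x hx) (by rw [← hbot]; exact bot_le)⟩
  · have hC : ∀ t : EReal, t < s → (K ∩ f ⁻¹' Ici t).Nonempty := by
      intro t ht
      rw [hs, lt_iSup_iff] at ht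
      obtain ⟨x, hx⟩ := ht
      rw [lt_iSup_iff] at hx
      obtain ⟨hxK, hx⟩ := hx
      exact ⟨x, hxK, le_of_lt hx⟩
    have hclosed : ∀ t : EReal, IsClosed (f ⁻¹' Ici t) := by
      intro t
      have : f ⁻¹' Ici t = (f ⁻¹' Iio t)ᶜ := by
        ext x; simp [not_lt]
      rw [this]
      exact (upperSemicontinuous_iff_isOpen_preimage.1 hf t).isClosed_compl
    haveI : Nonempty (Iio s) := ⟨⟨⊥, hbot⟩⟩
    have hinter : (⋂ t : Iio s, K ∩ f ⁻¹' Ici (t : EReal)).Nonempty := by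
      apply IsCompact.nonempty_iInter_of_directed_nonempty_isCompact_isClosed
      · intro t t'
        rcases le_total (t : EReal) t' with h | h
        · exact ⟨t', fun x hx => ⟨hx.1, le_trans h hx.2⟩, fun x hx => hx⟩
        · exact ⟨t, fun x hx => hx, fun x hx => ⟨hx.1, le_trans h hx.2⟩⟩
      · exact fun t => hC t t.2
      · exact fun t => hK.inter_right (hclosed t)
      · exact fun t => (hK.isClosed.inter (hclosed t))
    obtain ⟨x₀, hx₀⟩ := hinter
    simp only [mem_iInter, mem_inter_iff, mem_preimage, mem_Ici, Subtype.forall, mem_Iio] at hx₀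
    have hx₀K : x₀ ∈ K := (hx₀ ⊥ hbot).1
    refine ⟨x₀, hx₀K, fun x hx => le_trans (hle x hx) ?_⟩
    by_contra h
    push_neg at h
    obtain ⟨t, ht1, ht2⟩ := exists_between h
    exact absurd ((hx₀ t ht2).2) (not_le.2 ht1)

lemma dmap_le {X Y : Type*} {g : X → Y} {f : X → EReal} {t : EReal} {y : Y}
    (h : ∀ x, g x = y → f x ≤ t) : Dmap g f y ≤ t :=
  iSup₂_le fun x hx => h x hx

lemma le_dmap {X Y : Type*} {g : X → Y} {f : X → EReal} {x : X} :
    f x ≤ Dmap g f (g x) :=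
  le_biSup f (show x ∈ g ⁻¹' {g x} from rfl)

lemma dmap_attained {X Y : Type*} [TopologicalSpace X] [CompactSpace X] [T2Space X]
    [TopologicalSpace Y] [T2Space Y] {g : X → Y} (hg : Continuous g)
    {f : X → EReal} (hf : UpperSemicontinuous f) {y : Y} (hne : (g ⁻¹' {y}).Nonempty) :
    ∃ x₀, g x₀ = y ∧ f x₀ = Dmap g f y := by
  have hKc : IsCompact (g ⁻¹' {y}) := (isClosed_singleton.preimage hg).isCompact
  obtain ⟨x₀, hx₀, hmax⟩ := usc_exists_max hf hKc hne
  have hgy : g x₀ = y := hx₀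
  exact ⟨x₀, hgy, le_antisymm (by rw [← hgy]; exact le_dmap)
    (dmap_le fun x hx => hmax x hx)⟩

lemma dmap_lt_iff {X Y : Type*} [TopologicalSpace X] [CompactSpace X] [T2Space X]
    [TopologicalSpace Y] [T2Space Y] {g : X → Y} (hg : Continuous g)
    {f : X → EReal} (hf : UpperSemicontinuous f) {t : EReal} (ht : ⊥ < t) (y : Y) :
    Dmap g f y < t ↔ ∀ x, g x = y → f x < t := by
  constructor
  · intro h x hx
    have h1 : f x ≤ Dmap g f (g x) := le_dmap
    rw [hx] at h1
    exact lt_of_le_of_lt h1 h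
  · intro h
    rcases eq_empty_or_nonempty (g ⁻¹' {y}) with he | hne
    · have : Dmap g f y = ⊥ := by
        apply le_bot_iff.1
        exact dmap_le fun x hx => absurd (show x ∈ g ⁻¹' {y} from hx) (by rw [he]; exact notMem_empty x)
      rw [this]; exact ht
    · obtain ⟨x₀, hx₀, heq⟩ := dmap_attained hg hf hne
      rw [← heq]; exact h x₀ hx₀

lemma usc_Ici_closed {X : Type*} [TopologicalSpace X] {f : X → EReal}
    (hf : UpperSemicontinuous f) (t : EReal) : IsClosed (f ⁻¹' Ici t) := by
  have : f ⁻¹' Ici t = (f ⁻¹' Iio t)ᶜ := by ext x; simp [not_lt]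
  rw [this]
  exact (upperSemicontinuous_iff_isOpen_preimage.1 hf t).isClosed_compl

lemma dmap_memD {X Y : Type*} [TopologicalSpace X] [CompactSpace X] [T2Space X]
    [TopologicalSpace Y] [T2Space Y] {g : X → Y} (hg : Continuous g)
    {f : X → EReal} (hf : MemD f) : MemD (Dmap g f) := by
  refine ⟨?_, fun y => dmap_le fun x _ => hf.2.1 x, ?_⟩
  · rw [upperSemicontinuous_iff_isOpen_preimage]
    intro t
    rcases eq_or_lt_of_le (bot_le : (⊥ : EReal) ≤ t) with hbot | hbot
    · have : Dmap g f ⁻¹' Iio t = ∅ := by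
        ext y; simp [← hbot]
      rw [this]; exact isOpen_empty
    · have : Dmap g f ⁻¹' Iio t = (g '' (f ⁻¹' Ici t))ᶜ := by
        ext y
        simp only [mem_preimage, mem_Iio, mem_compl_iff, mem_image, not_exists, not_and,
          mem_Ici]
        rw [dmap_lt_iff hg hf.1 hbot]
        constructor
        · intro h x hx hgx
          exact absurd (h x hgx) (not_lt.2 hx)
        · intro h x hgx
          by_contra hc
          exact h x (not_lt.1 hc) hgx
      rw [this]
      exact (hg.isClosedMap _ (usc_Ici_closed hf.1 t)).isOpen_compl
  · obtain ⟨x, hx⟩ := hf.2.2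
    refine ⟨g x, le_antisymm (dmap_le fun x' _ => hf.2.1 x') ?_⟩
    calc (0 : EReal) = f x := hx.symm
    _ ≤ Dmap g f (g x) := le_dmap


end AuxStmt6

open Set in
/-- For a continuous map `g : X → Y` of compacta and `f ∈ DX`, the
function `Dg(f)(y) = max f(g⁻¹(y))` (with `max ∅ = -∞`, the maximum over a nonempty
fiber being attained) belongs to `DY`, and the resulting map `Dg : DX → DY` is
continuous. -/
theorem stmt6 {X Y : Type*} [TopologicalSpace X] [CompactSpace X] [T2Space X]
    [TopologicalSpace Y] [CompactSpace Y] [T2Space Y]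
    (g : X → Y) (hg : Continuous g) :
    (∀ f : X → EReal, MemD f →
        MemD (Dmap g f) ∧
        ∀ y : Y, (g ⁻¹' {y}).Nonempty → ∃ x₀, g x₀ = y ∧ f x₀ = Dmap g f y) ∧
    ∃ Dg : Dspace X → Dspace Y,
      (∀ (f : Dspace X) (y : Y), (Dg f).toFun y = Dmap g f.toFun y) ∧
      Continuous Dg := by
  refine ⟨fun f hf => ⟨dmap_memD hg hf, fun y hy => dmap_attained hg hf.1 hy⟩, ?_⟩
  refine ⟨fun f => ⟨Dmap g f.toFun, dmap_memD hg f.memD⟩, fun f y => rfl, ?_⟩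
  rw [continuous_generateFrom_iff]
  rintro S (⟨A, t, hA, ht, rfl⟩ | ⟨U, t, hU, ht, rfl⟩)
  · rcases eq_or_lt_of_le (bot_le : (⊥ : EReal) ≤ t) with hbot | hbot
    · rcases eq_empty_or_nonempty A with hAe | ⟨a, ha⟩
      · have : (fun f : Dspace X => (⟨Dmap g f.toFun, dmap_memD hg f.memD⟩ : Dspace Y)) ⁻¹'
            {f : Dspace Y | ∀ a ∈ A, f.toFun a < t} = univ := by
          ext f; simp [hAe]
        rw [this]; exact isOpen_univ
      · have : (fun f : Dspace X => (⟨Dmap g f.toFun, dmap_memD hg f.memD⟩ : Dspace Y)) ⁻¹'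
            {f : Dspace Y | ∀ a ∈ A, f.toFun a < t} = ∅ := by
          ext f
          simp only [mem_preimage, mem_setOf_eq, mem_empty_iff_false, iff_false, not_forall]
          exact ⟨a, ha, by simp [← hbot]⟩
        rw [this]; exact isOpen_empty
    · have : (fun f : Dspace X => (⟨Dmap g f.toFun, dmap_memD hg f.memD⟩ : Dspace Y)) ⁻¹'
          {f : Dspace Y | ∀ a ∈ A, f.toFun a < t} =
          {f : Dspace X | ∀ x ∈ g ⁻¹' A, f.toFun x < t} := by
        ext f
        simp only [mem_preimage, mem_setOf_eq]
        constructor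
        · intro h x hx
          have h1 : f.toFun x ≤ Dmap g f.toFun (g x) := le_dmap
          exact lt_of_le_of_lt h1 (h (g x) hx)
        · intro h a ha
          rw [dmap_lt_iff hg f.memD.1 hbot]
          intro x hx
          exact h x (by rw [hx]; exact ha)
      rw [this]
      exact TopologicalSpace.isOpen_generateFrom_of_mem
        (Or.inl ⟨g ⁻¹' A, t, hA.preimage hg, ht, rfl⟩)
  · have : (fun f : Dspace X => (⟨Dmap g f.toFun, dmap_memD hg f.memD⟩ : Dspace Y)) ⁻¹'
        {f : Dspace Y | ∃ a ∈ U, t < f.toFun a} =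
        {f : Dspace X | ∃ x ∈ g ⁻¹' U, t < f.toFun x} := by
      ext f
      simp only [mem_preimage, mem_setOf_eq]
      constructor
      · rintro ⟨a, ha, hlt⟩
        rw [Dmap, lt_iSup_iff] at hlt
        obtain ⟨x, hx⟩ := hlt
        rw [lt_iSup_iff] at hx
        obtain ⟨hxa, hx⟩ := hx
        exact ⟨x, by rw [show g x = a from hxa]; exact ha, hx⟩
      · rintro ⟨x, hx, hlt⟩
        exact ⟨g x, hx, lt_of_lt_of_le hlt le_dmap⟩
    rw [this]
    exact TopologicalSpace.isOpen_generateFrom_of_mem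
      (Or.inr ⟨g ⁻¹' U, t, hU.preimage hg, ht, rfl⟩)
end

section
/- Let X be a compactum. The maps εX : X → DX and κX : D(DX) → DX are well defined (εX(x) ∈ DX for every x ∈ X and κX(F) ∈ DX for every F ∈ D(DX)), and the unit laws hold: κX ∘ D(εX) = id_{DX} and κX ∘ ε_{DX} = id_{DX}. -/
open Classical in
/-- The unit `εX(x) ∈ DX`: `εX(x)(y) = 0` if `y = x` and `-∞` otherwise. -/
noncomputable def epsFun {X : Type*} (x : X) : X → EReal :=
  fun y => if y = x then 0 else ⊥

/-- The multiplication `κX(F)(x) = max{f(x) + F(f) : f ∈ DX}` for `F : DX → [-∞,0]`. -/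
noncomputable def kappaFun (X : Type*) [TopologicalSpace X] (F : Dspace X → EReal) :
    X → EReal :=
  fun x => ⨆ f : Dspace X, f.toFun x + F f

/-!
`κX(F)(x) = ⨆ f, f(x) + F(f)` is a supremum over `DX` of a jointly upper semicontinuous
function of `(x, f)` (evaluation is jointly upper semicontinuous because `X` is regular), so by
the tube lemma it is upper semicontinuous once `DX` is compact.

Compactness of `DX` follows from Alexander's subbasis theorem. Given a cover `P` by subbasic
sets, let `φ` be the largest function `≤ 0` with `φ ≤ s` on `U` for all `S₊(U, s) ∈ P`. If `φ`
attains `0`, it is a density lying in no `S₊` of `P`, hence in some `S₋(A, t) ∈ P`; covering the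
compact set `A` by finitely many `U` with `s < t` shows that those `S₊(U, s)` together with
`S₋(A, t)` cover `DX`. If `φ < 0` everywhere, the same argument with `A = X`, `t = 0` gives a
finite cover by `S₊` sets alone, since no density is `< 0` everywhere.
-/

open Filter Topology Set

theorem upperSemicontinuous_iSup_of_compactSpace {α β γ : Type*} [TopologicalSpace α]
    [TopologicalSpace β] [CompactSpace β] [CompleteLinearOrder γ] [DenselyOrdered γ]
    {h : α × β → γ} (hh : UpperSemicontinuous h) :
    UpperSemicontinuous fun x => ⨆ y, h (x, y) := by
  intro x t hxt
  obtain ⟨s, hxs, hst⟩ := exists_between hxt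
  have hnear : ∀ᶠ x' in 𝓝 x, ∀ y ∈ univ, h (x', y) < s :=
    isCompact_univ.eventually_forall_of_forall_eventually fun y _ =>
      hh (x, y) s ((le_iSup (fun y => h (x, y)) y).trans_lt hxs)
  exact hnear.mono fun x' hx' => (iSup_le fun y => (hx' y trivial).le).trans_lt hst

theorem memD_epsFun {X : Type*} [TopologicalSpace X] [T1Space X] (x : X) :
    MemD (epsFun x) := by
  have hle : ∀ y, epsFun x y ≤ 0 := fun y => by unfold epsFun; split_ifs <;> simp
  refine ⟨fun y t hyt => ?_, hle, x, if_pos rfl⟩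
  by_cases hy : y = x
  · have h0t : (0 : EReal) < t := by simpa [epsFun, hy] using hyt
    exact Eventually.of_forall fun z => (hle z).trans_lt h0t
  · filter_upwards [isOpen_compl_singleton.mem_nhds hy] with z hz
    simpa [epsFun, hy, show z ≠ x from hz] using hyt

namespace Dspace

variable {X : Type*} [TopologicalSpace X]

def sMinus (A : Set X) (t : EReal) : Set (Dspace X) := {f | ∀ a ∈ A, f.toFun a < t}

def sPlus (U : Set X) (t : EReal) : Set (Dspace X) := {f | ∃ a ∈ U, t < f.toFun a}

theorem isOpen_sMinus {A : Set X} (hA : IsClosed A) {t : EReal} (ht : t ≤ 0) :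
    IsOpen (sMinus A t) :=
  TopologicalSpace.isOpen_generateFrom_of_mem (Or.inl ⟨A, t, hA, ht, rfl⟩)

theorem upperSemicontinuous_eval [RegularSpace X] :
    UpperSemicontinuous fun p : X × Dspace X => p.2.toFun p.1 := by
  rintro ⟨x, f⟩ t hxt
  rcases lt_or_ge 0 t with ht | ht
  · exact Eventually.of_forall fun p => (p.2.memD.2.1 p.1).trans_lt ht
  obtain ⟨K, hK, hKc, hKt⟩ :=
    exists_mem_nhds_isClosed_subset ((f.memD.1.isOpen_preimage t).mem_nhds hxt)
  have hf : sMinus K t ∈ 𝓝 f := (isOpen_sMinus hKc ht).mem_nhds fun a ha => hKt ha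
  filter_upwards [prod_mem_nhds hK hf] with p hp using hp.2 p.1 hp.1

noncomputable def envelope (P : Set (Set (Dspace X))) (x : X) : EReal :=
  sInf (insert 0 {s | ∃ U, IsOpen U ∧ x ∈ U ∧ sPlus U s ∈ P})

variable {P : Set (Set (Dspace X))}

theorem envelope_le_zero (P : Set (Set (Dspace X))) (x : X) : envelope P x ≤ 0 :=
  sInf_le (mem_insert _ _)

theorem envelope_le {U : Set X} {s : EReal} (hU : IsOpen U) (hP : sPlus U s ∈ P) {x : X}
    (hx : x ∈ U) : envelope P x ≤ s :=
  sInf_le (mem_insert_of_mem _ ⟨U, hU, hx, hP⟩)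

theorem exists_sPlus_of_envelope_lt {x : X} {t : EReal} (h : envelope P x < t) :
    0 < t ∨ ∃ U s, IsOpen U ∧ x ∈ U ∧ sPlus U s ∈ P ∧ s < t := by
  obtain ⟨s, hs, hst⟩ := sInf_lt_iff.1 h
  rcases hs with rfl | ⟨U, hU, hx, hP⟩
  exacts [Or.inl hst, Or.inr ⟨U, s, hU, hx, hP, hst⟩]

theorem upperSemicontinuous_envelope (P : Set (Set (Dspace X))) :
    UpperSemicontinuous (envelope P) := by
  intro x t hxt
  rcases exists_sPlus_of_envelope_lt hxt with ht | ⟨U, s, hU, hx, hP, hst⟩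
  · exact Eventually.of_forall fun y => (envelope_le_zero P y).trans_lt ht
  · filter_upwards [hU.mem_nhds hx] with y hy using (envelope_le hU hP hy).trans_lt hst

theorem exists_finite_compl_subset_sMinus {A : Set X} (hA : IsCompact A) {t : EReal}
    (ht : t ≤ 0) (h : ∀ a ∈ A, envelope P a < t) :
    ∃ Q ⊆ P, Q.Finite ∧ (⋃₀ Q)ᶜ ⊆ sMinus A t := by
  have hcov : ∀ a ∈ A, ∃ U s, IsOpen U ∧ a ∈ U ∧ sPlus U s ∈ P ∧ s < t := fun a ha =>
    (exists_sPlus_of_envelope_lt (h a ha)).resolve_left ht.not_gt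
  choose! U s hU haU hP hst using hcov
  obtain ⟨I, hIA, hAI⟩ := hA.elim_nhds_subcover U fun a ha => (hU a ha).mem_nhds (haU a ha)
  refine ⟨(fun a => sPlus (U a) (s a)) '' I, ?_, I.finite_toSet.image _, ?_⟩
  · rintro _ ⟨a, ha, rfl⟩
    exact hP a (hIA a ha)
  · intro f hf b hb
    obtain ⟨a, ha, hba⟩ := mem_iUnion₂.1 (hAI hb)
    have hfa : f ∉ sPlus (U a) (s a) := fun hfa => hf ⟨_, ⟨a, ha, rfl⟩, hfa⟩
    exact (not_lt.1 fun hlt => hfa ⟨b, hba, hlt⟩).trans_lt (hst a (hIA a ha))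

instance [CompactSpace X] : CompactSpace (Dspace X) := by
  refine compactSpace_generateFrom rfl fun P hPS hPcov => ?_
  by_cases h0 : ∃ x, envelope P x = 0
  · let φ : Dspace X := ⟨envelope P, upperSemicontinuous_envelope P, envelope_le_zero P, h0⟩
    obtain ⟨S, hSP, hφS⟩ := sUnion_eq_univ_iff.1 hPcov φ
    rcases hPS hSP with ⟨A, t, hA, ht, rfl⟩ | ⟨U, t, hU, ht, rfl⟩
    · obtain ⟨Q, hQP, hQ, hQA⟩ := exists_finite_compl_subset_sMinus hA.isCompact ht hφS
      refine ⟨insert _ Q, insert_subset hSP hQP, hQ.insert _, eq_univ_of_forall fun f => ?_⟩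
      by_cases hf : f ∈ ⋃₀ Q
      · exact sUnion_subset_sUnion (subset_insert _ _) hf
      · exact ⟨_, mem_insert _ _, hQA hf⟩
    · obtain ⟨a, ha, hta⟩ := hφS
      exact absurd (envelope_le hU hSP ha) (not_le.2 hta)
  · simp only [not_exists] at h0
    obtain ⟨Q, hQP, hQ, hQcov⟩ := exists_finite_compl_subset_sMinus isCompact_univ le_rfl
      fun x _ => (envelope_le_zero P x).lt_of_ne (h0 x)
    refine ⟨Q, hQP, hQ, eq_univ_of_forall fun f => by_contra fun hf => ?_⟩
    obtain ⟨x, hx⟩ := f.memD.2.2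
    exact (hQcov hf x trivial).ne hx

end Dspace

theorem memD_kappaFun {X : Type*} [TopologicalSpace X] [CompactSpace X] [RegularSpace X]
    {F : Dspace X → EReal} (hF : MemD F) : MemD (kappaFun X F) := by
  obtain ⟨hFusc, hFle, f₀, hf₀⟩ := hF
  have hle : ∀ x, kappaFun X F x ≤ 0 := fun x =>
    iSup_le fun g => by simpa using add_le_add (g.memD.2.1 x) (hFle g)
  refine ⟨?_, hle, ?_⟩
  · have hne_top : ∀ {e : EReal}, e ≤ 0 → e ≠ ⊤ := fun he => (he.trans_lt EReal.zero_lt_top).ne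
    refine upperSemicontinuous_iSup_of_compactSpace
      (Dspace.upperSemicontinuous_eval.add' (hFusc.comp continuous_snd) fun p => ?_)
    exact EReal.continuousAt_add (Or.inl (hne_top (p.2.memD.2.1 p.1)))
      (Or.inr (hne_top (hFle p.2)))
  · obtain ⟨x₀, hx₀⟩ := f₀.memD.2.2
    exact ⟨x₀, (hle x₀).antisymm (le_iSup_of_le f₀ (by rw [hx₀, hf₀, add_zero]))⟩

theorem kappaFun_epsFun {X : Type*} [TopologicalSpace X] (f : Dspace X) :
    kappaFun X (epsFun f) = f.toFun := by
  funext x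
  refine le_antisymm (iSup_le fun g => ?_) (le_iSup_of_le f (by simp [epsFun]))
  by_cases h : g = f
  · subst h; simp [epsFun]
  · simp [epsFun, h]

theorem kappaFun_map_epsFun {X : Type*} [TopologicalSpace X] [T1Space X] (f : Dspace X) :
    kappaFun X (fun g : Dspace X => ⨆ x ∈ {x : X | epsFun x = g.toFun}, f.toFun x) =
      f.toFun := by
  funext z
  refine le_antisymm (iSup_le fun g => ?_) ?_
  · by_cases hgz : g.toFun z = ⊥
    · simp [hgz]
    have hfib : (⨆ x ∈ {x : X | epsFun x = g.toFun}, f.toFun x) ≤ f.toFun z := by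
      refine iSup₂_le fun x hx => ?_
      have hzx : z = x := by_contra fun hne =>
        hgz (by simp [← show epsFun x = g.toFun from hx, epsFun, hne])
      rw [hzx]
    simpa using add_le_add (g.memD.2.1 z) hfib
  · refine le_iSup_of_le ⟨epsFun z, memD_epsFun z⟩ ?_
    simpa [epsFun] using le_iSup₂ (f := fun x (_ : epsFun x = epsFun z) => f.toFun x) z rfl

/-- For a compactum `X`, the maps `εX : X → DX` and
`κX : D(DX) → DX` are well defined, and the unit laws hold:
`κX ∘ D(εX) = id` and `κX ∘ ε_{DX} = id` on `DX`.  (Here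
`D(εX)(f)(g) = max f(εX⁻¹(g)) = ⨆ {f(x) : εX(x) = g}`.) -/
theorem stmt8 {X : Type*} [TopologicalSpace X] [CompactSpace X] [T2Space X] :
    (∀ x : X, MemD (epsFun x)) ∧
    (∀ F : Dspace X → EReal, MemD F → MemD (kappaFun X F)) ∧
    (∀ f : Dspace X,
        kappaFun X
          (fun g : Dspace X => ⨆ x ∈ {x : X | epsFun x = g.toFun}, f.toFun x) =
        f.toFun) ∧
    (∀ f : Dspace X, kappaFun X (epsFun f) = f.toFun) :=
  ⟨memD_epsFun, fun _ => memD_kappaFun, kappaFun_map_epsFun, kappaFun_epsFun⟩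
end

section
/- Let X be a compactum. The maps ε₁X : X → D₁X and κ₁X : D₁(D₁X) → D₁X are well defined, satisfy the unit laws κ₁X ∘ D₁(ε₁X) = id_{D₁X} and κ₁X ∘ ε₁_{D₁X} = id_{D₁X}, and κ₁ is associative: κ₁X ∘ D₁(κ₁X) = κ₁X ∘ κ₁_{D₁X}; hence (D₁, ε₁, κ₁) is a monad on the category of compacta. -/
/-- Membership in `D₁X`: an upper semicontinuous function `X → [0,1]`
attaining the maximal value `1`. -/
def MemD1 {X : Type*} [TopologicalSpace X] (f : X → ℝ) : Prop :=
  UpperSemicontinuous f ∧ (∀ x, 0 ≤ f x ∧ f x ≤ 1) ∧ ∃ x, f x = 1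

/-- The space `D₁X` of densities of `·`-measures. -/
structure D1space (X : Type*) [TopologicalSpace X] where
  toFun : X → ℝ
  memD1 : MemD1 toFun

/-- The topology on `D₁X` generated by the subbase of sets
`S₋(B,t) = {f : f(a) < t for all a ∈ B}` (`B` closed, `t ∈ [0,1]`) and
`S₊(U,t) = {f : f(a) > t for some a ∈ U}` (`U` open, `t ∈ [0,1]`). -/
instance (X : Type*) [TopologicalSpace X] : TopologicalSpace (D1space X) :=
  TopologicalSpace.generateFrom
    ({S | ∃ (B : Set X) (t : ℝ), IsClosed B ∧ 0 ≤ t ∧ t ≤ 1 ∧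
        S = {f : D1space X | ∀ a ∈ B, f.toFun a < t}} ∪
     {S | ∃ (U : Set X) (t : ℝ), IsOpen U ∧ 0 ≤ t ∧ t ≤ 1 ∧
        S = {f : D1space X | ∃ a ∈ U, t < f.toFun a}})
open Classical in
/-- The unit `ε₁X(x) ∈ D₁X`: `ε₁X(x)(y) = 1` if `y = x` and `0` otherwise. -/
noncomputable def eps1Fun {X : Type*} (x : X) : X → ℝ :=
  fun y => if y = x then 1 else 0

/-- The multiplication `κ₁X(F)(x) = max{f(x) · F(f) : f ∈ D₁X}` for `F : D₁X → [0,1]`. -/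
noncomputable def kappa1Fun (X : Type*) [TopologicalSpace X] (F : D1space X → ℝ) :
    X → ℝ :=
  fun x => ⨆ f : D1space X, f.toFun x * F f

open Set TopologicalSpace

section Aux
variable {X : Type*} [TopologicalSpace X]

lemma bdd1 {ι : Sort*} {f : ι → ℝ} (h : ∀ i, f i ≤ 1) : BddAbove (range f) :=
  ⟨1, by rintro r ⟨i, rfl⟩; exact h i⟩

/-- `f i ≤ ⨆ j, f j` for a family of reals bounded by `1`. -/
lemma rle_Sup {ι : Sort*} {f : ι → ℝ} (hb : ∀ i, f i ≤ 1) (i : ι) : f i ≤ ⨆ j, f j :=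
  le_ciSup (bdd1 hb) i

/-- Subbasic sets of the first kind. -/
def Sminus (B : Set X) (t : ℝ) : Set (D1space X) := {f | ∀ a ∈ B, f.toFun a < t}

/-- Subbasic sets of the second kind. -/
def Splus (U : Set X) (t : ℝ) : Set (D1space X) := {f | ∃ a ∈ U, t < f.toFun a}

/-- The subbase of the topology of `D₁X`. -/
def D1sub (X : Type*) [TopologicalSpace X] : Set (Set (D1space X)) :=
  {S | ∃ (B : Set X) (t : ℝ), IsClosed B ∧ 0 ≤ t ∧ t ≤ 1 ∧ S = Sminus B t} ∪
  {S | ∃ (U : Set X) (t : ℝ), IsOpen U ∧ 0 ≤ t ∧ t ≤ 1 ∧ S = Splus U t}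

lemma D1topo_eq :
    (inferInstance : TopologicalSpace (D1space X)) = generateFrom (D1sub X) := rfl

lemma isOpen_Sminus {B : Set X} {t : ℝ} (hB : IsClosed B) (ht0 : 0 ≤ t) (ht1 : t ≤ 1) :
    IsOpen (Sminus B t) :=
  TopologicalSpace.GenerateOpen.basic _ (Or.inl ⟨B, t, hB, ht0, ht1, rfl⟩)

/-- Alexander's subbase theorem. -/
lemma alexander_subbase {α : Type*} (S : Set (Set α)) [t : TopologicalSpace α]
    (ht : t = generateFrom S)
    (h : ∀ C ⊆ S, ⋃₀ C = univ → ∃ C' ⊆ C, C'.Finite ∧ ⋃₀ C' = univ) :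
    IsCompact (univ : Set α) := by
  rw [isCompact_iff_ultrafilter_le_nhds]
  intro U _
  by_contra hc
  push_neg at hc
  have key : ∀ x : α, ∃ s ∈ S, x ∈ s ∧ s ∉ U := by
    intro x
    have hx := hc x (mem_univ x)
    by_contra hK
    push_neg at hK
    apply hx
    rw [ht, nhds_generateFrom]
    refine le_iInf₂ fun s hs => ?_
    rw [Filter.le_principal_iff]
    exact hK s hs.2 hs.1
  set C : Set (Set α) := {s | s ∈ S ∧ s ∉ U} with hC
  have hCcov : ⋃₀ C = univ := by
    apply eq_univ_of_forall
    intro x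
    obtain ⟨s, hsS, hxs, hsU⟩ := key x
    exact ⟨s, ⟨hsS, hsU⟩, hxs⟩
  obtain ⟨C', hC'C, hC'fin, hC'cov⟩ := h C (fun s hs => hs.1) hCcov
  have hmem : ∀ s ∈ C', sᶜ ∈ U := fun s hs =>
    Ultrafilter.compl_mem_iff_notMem.2 (hC'C hs).2
  have hbi : ⋂ s ∈ C', sᶜ ∈ (U : Filter α) := (Filter.biInter_mem hC'fin).2 hmem
  have hempty : (⋂ s ∈ C', sᶜ) = (∅ : Set α) := by
    have : (⋂ s ∈ C', sᶜ) = (⋃₀ C')ᶜ := by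
      rw [compl_sUnion, sInter_eq_biInter]
      simp
    rw [this, hC'cov, compl_univ]
  rw [hempty] at hbi
  exact Filter.empty_notMem (U : Filter α) hbi

/-- The space `D₁X` is compact for a compactum `X`. -/
lemma isCompact_D1 [CompactSpace X] : IsCompact (univ : Set (D1space X)) := by
  apply alexander_subbase (D1sub X) D1topo_eq
  intro C hCsub hCcov
  by_contra hfin
  push_neg at hfin
  -- the sets of "plus" and "minus" parameters
  set P : Set (Set X × ℝ) := {p | IsOpen p.1 ∧ 0 ≤ p.2 ∧ p.2 ≤ 1 ∧ Splus p.1 p.2 ∈ C} with hP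
  set M : Set (Set X × ℝ) := {p | IsClosed p.1 ∧ 0 ≤ p.2 ∧ p.2 ≤ 1 ∧ Sminus p.1 p.2 ∈ C} with hM
  set T : X → Set ℝ := fun x => insert 1 {r | ∃ p ∈ P, x ∈ p.1 ∧ r = p.2} with hT
  have hTne : ∀ x, (T x).Nonempty := fun x => ⟨1, mem_insert _ _⟩
  have hTbdd : ∀ x, BddBelow (T x) := by
    intro x
    refine ⟨0, fun r hr => ?_⟩
    rcases hr with h1 | ⟨p, hp, _, rfl⟩
    · rw [h1]; norm_num
    · exact hp.2.1
  set c : X → ℝ := fun x => sInf (T x) with hc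
  have hc0 : ∀ x, 0 ≤ c x := by
    intro x
    apply le_csInf (hTne x)
    intro r hr
    rcases hr with h1 | ⟨p, hp, _, rfl⟩
    · rw [h1]; norm_num
    · exact hp.2.1
  have hc1 : ∀ x, c x ≤ 1 := fun x => csInf_le (hTbdd x) (mem_insert _ _)
  have hcle : ∀ p ∈ P, ∀ x ∈ p.1, c x ≤ p.2 := fun p hp x hx =>
    csInf_le (hTbdd x) (Or.inr ⟨p, hp, hx, rfl⟩)
  have hlt : ∀ x (t : ℝ), c x < t → t ≤ 1 → ∃ p ∈ P, x ∈ p.1 ∧ p.2 < t := by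
    intro x t h ht1
    obtain ⟨r, hr, hrt⟩ := exists_lt_of_csInf_lt (hTne x) h
    rcases hr with h1 | ⟨p, hp, hxp, rfl⟩
    · rw [h1] at hrt; linarith
    · exact ⟨p, hp, hxp, hrt⟩
  have husc : UpperSemicontinuous c := by
    intro x t ht
    rcases le_or_gt t 1 with ht1 | ht1
    · obtain ⟨p, hp, hxp, hpt⟩ := hlt x t ht ht1
      filter_upwards [hp.1.mem_nhds hxp] with y hy
      exact lt_of_le_of_lt (hcle p hp y hy) hpt
    · filter_upwards with y
      exact lt_of_le_of_lt (hc1 y) ht1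
  -- Claim A : c attains the value 1
  have claimA : ∃ x, c x = 1 := by
    by_contra hA
    push_neg at hA
    have hA' : ∀ x, c x < 1 := fun x => lt_of_le_of_ne (hc1 x) (hA x)
    set ι := {p : Set X × ℝ // p ∈ P ∧ p.2 < 1} with hι
    have hcov : (univ : Set X) ⊆ ⋃ i : ι, i.1.1 := by
      intro x _
      obtain ⟨p, hp, hxp, hp1⟩ := hlt x 1 (hA' x) le_rfl
      exact mem_iUnion.2 ⟨⟨p, hp, hp1⟩, hxp⟩
    obtain ⟨s, hs⟩ := isCompact_univ.elim_finite_subcover (fun i : ι => i.1.1)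
      (fun i => i.2.1.1) hcov
    refine hfin ((fun i : ι => Splus i.1.1 i.1.2) '' ↑s) ?_ ((s.finite_toSet).image _) ?_
    · rintro S ⟨i, _, rfl⟩
      exact i.2.1.2.2.2
    · apply eq_univ_of_forall
      intro f
      obtain ⟨x, hx1⟩ := f.memD1.2.2
      obtain ⟨i, his, hxi⟩ := by
        have := hs (mem_univ x)
        simpa using this
      exact ⟨Splus i.1.1 i.1.2, ⟨i, his, rfl⟩, ⟨x, hxi, by rw [hx1]; exact i.2.2⟩⟩
  -- Claim B : on each minus-set, c reaches the threshold
  have claimB : ∀ p ∈ M, ∃ a ∈ p.1, p.2 ≤ c a := by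
    intro p hpM
    by_contra hB
    push_neg at hB
    set ι := {q : Set X × ℝ // q ∈ P ∧ q.2 < p.2} with hι
    have hcov : p.1 ⊆ ⋃ i : ι, i.1.1 := by
      intro a ha
      obtain ⟨q, hq, haq, hq1⟩ := hlt a p.2 (hB a ha) hpM.2.2.1
      exact mem_iUnion.2 ⟨⟨q, hq, hq1⟩, haq⟩
    obtain ⟨s, hs⟩ := (hpM.1.isCompact).elim_finite_subcover (fun i : ι => i.1.1)
      (fun i => i.2.1.1) hcov
    refine hfin (insert (Sminus p.1 p.2) ((fun i : ι => Splus i.1.1 i.1.2) '' ↑s)) ?_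
      (((s.finite_toSet).image _).insert _) ?_
    · rintro S (rfl | ⟨i, _, rfl⟩)
      · exact hpM.2.2.2
      · exact i.2.1.2.2.2
    · apply eq_univ_of_forall
      intro f
      by_cases hf : ∀ a ∈ p.1, f.toFun a < p.2
      · exact ⟨Sminus p.1 p.2, mem_insert _ _, hf⟩
      · push_neg at hf
        obtain ⟨a, hap, haf⟩ := hf
        obtain ⟨i, his, hai⟩ := by
          have := hs hap
          simpa using this
        exact ⟨Splus i.1.1 i.1.2, mem_insert_of_mem _ ⟨i, his, rfl⟩,
          ⟨a, hai, lt_of_lt_of_le i.2.2 haf⟩⟩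
  -- c is a member of D₁X not covered by C : contradiction
  obtain ⟨x1, hx1⟩ := claimA
  set cD : D1space X := ⟨c, husc, fun x => ⟨hc0 x, hc1 x⟩, ⟨x1, hx1⟩⟩ with hcD
  have : cD ∈ ⋃₀ C := by rw [hCcov]; trivial
  obtain ⟨S, hSC, hcS⟩ := this
  rcases hCsub hSC with ⟨B, t, hB, ht0, ht1, rfl⟩ | ⟨U, t, hU, ht0, ht1, rfl⟩
  · obtain ⟨a, haB, hac⟩ := claimB (B, t) ⟨hB, ht0, ht1, hSC⟩
    exact absurd (hcS a haB) (not_lt.2 hac)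
  · obtain ⟨a, haU, hat⟩ := hcS
    exact absurd hat (not_lt.2 (hcle (U, t) ⟨hU, ht0, ht1, hSC⟩ a haU))

/-- Well-definedness of `κ₁X`. -/
lemma memD1_kappa [CompactSpace X] [T2Space X] (F : D1space X → ℝ) (hF : MemD1 F) :
    MemD1 (kappa1Fun X F) := by
  obtain ⟨hFusc, hFb, fstar, hfstar⟩ := hF
  haveI : Nonempty (D1space X) := ⟨fstar⟩
  have hterm1 : ∀ (x : X) (h : D1space X), h.toFun x * F h ≤ 1 :=
    fun x h => mul_le_one₀ (h.memD1.2.1 x).2 (hFb h).1 (hFb h).2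
  have hbdd : ∀ x : X, BddAbove (range fun h : D1space X => h.toFun x * F h) :=
    fun x => bdd1 (hterm1 x)
  have hg1 : ∀ x, kappa1Fun X F x ≤ 1 := fun x => Real.iSup_le (hterm1 x) zero_le_one
  have hg0 : ∀ x, 0 ≤ kappa1Fun X F x := fun x =>
    Real.iSup_nonneg fun h => mul_nonneg (h.memD1.2.1 x).1 (hFb h).1
  refine ⟨?_, fun x => ⟨hg0 x, hg1 x⟩, ?_⟩
  · -- upper semicontinuity
    intro x₀ t ht
    rcases le_or_gt t 1 with ht1 | ht1
    swap
    · filter_upwards with y; exact lt_of_le_of_lt (hg1 y) ht1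
    have ht0 : 0 < t := lt_of_le_of_lt (hg0 x₀) ht
    -- for each density f, an open neighborhood in D₁X with a uniform bound near x₀
    have key : ∀ f : D1space X, ∃ (V : Set (D1space X)) (W : Set X) (γ : ℝ),
        IsOpen V ∧ f ∈ V ∧ W ∈ nhds x₀ ∧ 0 ≤ γ ∧ γ < t ∧
        ∀ h ∈ V, ∀ x ∈ W, h.toFun x * F h ≤ γ := by
      intro f
      set p := f.toFun x₀ with hp
      set q := F f with hq
      have hpq : p * q < t := lt_of_le_of_lt (le_ciSup (hbdd x₀) f) ht
      have hp0 : 0 ≤ p := (f.memD1.2.1 x₀).1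
      have hp1 : p ≤ 1 := (f.memD1.2.1 x₀).2
      have hq0 : 0 ≤ q := (hFb f).1
      have hq1 : q ≤ 1 := (hFb f).2
      rcases lt_or_ge q t with hqt | hqt
      · -- small F f : use only the sublevel set of F
        refine ⟨{h | F h < (q + t) / 2}, univ, (q + t) / 2,
          upperSemicontinuous_iff_isOpen_preimage.1 hFusc _, by simpa using by linarith,
          Filter.univ_mem, by linarith, by linarith, ?_⟩
        intro h hh x _
        calc h.toFun x * F h ≤ F h := mul_le_of_le_one_left (hFb h).1 (h.memD1.2.1 x).2
        _ ≤ (q + t) / 2 := le_of_lt hh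
      · -- large F f
        have hqpos : 0 < q := lt_of_lt_of_le ht0 hqt
        have hplt1 : p < 1 := by
          by_contra hge
          push_neg at hge
          have : p = 1 := le_antisymm hp1 hge
          rw [this, one_mul] at hpq; linarith
        set ε := min 1 ((t - p * q) / 4) with hε
        have hε0 : 0 < ε := lt_min one_pos (by linarith [hpq])
        have hε1 : ε ≤ 1 := min_le_left _ _
        have hε4 : 4 * ε ≤ t - p * q := by
          have := min_le_right 1 ((t - p * q) / 4); linarith [this]
        set a := min (p + ε) 1 with ha
        set b := q + ε with hb
        have hpa : p < a := lt_min (by linarith) hplt1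
        have ha0 : 0 ≤ a := le_min (by linarith) zero_le_one
        have ha1 : a ≤ 1 := min_le_right _ _
        have hb0 : 0 ≤ b := by linarith
        have hab : a * b < t := by
          have h1 : a * b ≤ (p + ε) * (q + ε) :=
            mul_le_mul_of_nonneg_right (min_le_left _ _) hb0
          nlinarith [hε0, hε1, hp1, hq1, hε4]
        -- a closed neighborhood of x₀ inside {f < a}
        have hopen : IsOpen {x | f.toFun x < a} :=
          upperSemicontinuous_iff_isOpen_preimage.1 f.memD1.1 a
        obtain ⟨W, hWn, hWc, hWsub⟩ :=
          exists_mem_nhds_isClosed_subset (hopen.mem_nhds (show x₀ ∈ _ from hpa))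
        refine ⟨Sminus W a ∩ {h | F h < b}, W, a * b,
          (isOpen_Sminus hWc ha0 ha1).inter
            (upperSemicontinuous_iff_isOpen_preimage.1 hFusc b),
          ⟨fun y hy => hWsub hy, by simp [hb]; linarith⟩, hWn, mul_nonneg ha0 hb0, hab, ?_⟩
        intro h hh x hx
        exact mul_le_mul (le_of_lt (hh.1 x hx)) (le_of_lt hh.2) (hFb h).1 ha0
    choose V W γ hVopen hVmem hWn hγ0 hγt hbound using key
    obtain ⟨s, hs⟩ := isCompact_D1.elim_finite_subcover V hVopen
      (fun h _ => mem_iUnion.2 ⟨h, hVmem h⟩)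
    have hsne : s.Nonempty := by
      obtain ⟨i, his, _⟩ := by have := hs (mem_univ fstar); simpa using this
      exact ⟨i, his⟩
    set γm := s.sup' hsne γ with hγm
    have hγm0 : 0 ≤ γm := le_trans (hγ0 hsne.choose) (Finset.le_sup' γ hsne.choose_spec)
    have hγmt : γm < t := (Finset.sup'_lt_iff hsne).2 fun i _ => hγt i
    filter_upwards [(Filter.biInter_finset_mem s).2 fun i _ => hWn i] with x hx
    refine lt_of_le_of_lt (Real.iSup_le (fun h => ?_) hγm0) hγmt
    obtain ⟨i, his, hhi⟩ := by have := hs (mem_univ h); simpa using this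
    exact le_trans (hbound i h hhi x (by exact mem_iInter₂.1 hx i his))
      (Finset.le_sup' γ his)
  · -- κ₁X(F) attains the value 1
    obtain ⟨xs, hxs⟩ := fstar.memD1.2.2
    refine ⟨xs, le_antisymm (hg1 xs) ?_⟩
    have := le_ciSup (hbdd xs) fstar
    rw [hxs, hfstar, one_mul] at this
    exact this

/-- Well-definedness of `ε₁X`. -/
lemma memD1_eps [T2Space X] (x : X) : MemD1 (eps1Fun x) := by
  have hb : ∀ y, 0 ≤ eps1Fun x y ∧ eps1Fun x y ≤ 1 := by
    intro y; unfold eps1Fun; split <;> norm_num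
  refine ⟨?_, hb, ⟨x, by simp [eps1Fun]⟩⟩
  intro y t ht
  by_cases hxy : y = x
  · subst hxy
    have h1 : (1 : ℝ) < t := by simpa [eps1Fun] using ht
    filter_upwards with z
    exact lt_of_le_of_lt (hb z).2 h1
  · have h0 : (0 : ℝ) < t := by simpa [eps1Fun, hxy] using ht
    filter_upwards [isOpen_compl_singleton.mem_nhds (by simpa using hxy : y ∈ ({x}ᶜ : Set X))]
      with z hz
    simpa [eps1Fun, show z ≠ x from hz] using h0

omit [TopologicalSpace X] in
lemma eps1Fun_inj {x y : X} (h : eps1Fun x = eps1Fun y) : x = y := by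
  by_contra hxy
  have := congrFun h x
  simp [eps1Fun, hxy] at this

end Aux

/-- For a compactum `X`, the maps `ε₁X : X → D₁X` and
`κ₁X : D₁(D₁X) → D₁X` are well defined, satisfy the unit laws
`κ₁X ∘ D₁(ε₁X) = id` and `κ₁X ∘ ε₁_{D₁X} = id`, and `κ₁` is associative:
`κ₁X ∘ D₁(κ₁X) = κ₁X ∘ κ₁_{D₁X}`; hence `(D₁, ε₁, κ₁)` is a monad on the
category of compacta.  (Here `D₁g(f)(y) = max f(g⁻¹(y))` with `max ∅ = 0`.) -/
theorem stmt12 {X : Type*} [TopologicalSpace X] [CompactSpace X] [T2Space X] :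
    (∀ x : X, MemD1 (eps1Fun x)) ∧
    (∀ F : D1space X → ℝ, MemD1 F → MemD1 (kappa1Fun X F)) ∧
    (∀ f : D1space X,
        kappa1Fun X
          (fun g : D1space X => ⨆ x ∈ {x : X | eps1Fun x = g.toFun}, f.toFun x) =
        f.toFun) ∧
    (∀ f : D1space X, kappa1Fun X (eps1Fun f) = f.toFun) ∧
    (∀ G : D1space (D1space (D1space X)),
        kappa1Fun X
          (fun g : D1space X =>
            ⨆ F ∈ {F : D1space (D1space X) | kappa1Fun X F.toFun = g.toFun},
              G.toFun F) =
        kappa1Fun X (kappa1Fun (D1space X) G.toFun)) := by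
  refine ⟨memD1_eps, memD1_kappa, ?_, ?_, ?_⟩
  · -- first unit law : κ₁X ∘ D₁(ε₁X) = id
    intro f
    funext x
    set Φ : D1space X → ℝ :=
      fun g => ⨆ y ∈ {y : X | eps1Fun y = g.toFun}, f.toFun y with hΦ
    have hf0 : ∀ y, 0 ≤ f.toFun y := fun y => (f.memD1.2.1 y).1
    have hf1 : ∀ y, f.toFun y ≤ 1 := fun y => (f.memD1.2.1 y).2
    have hΦ1 : ∀ g, Φ g ≤ 1 := fun g =>
      Real.iSup_le (fun y => Real.iSup_le (fun _ => hf1 y) zero_le_one) zero_le_one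
    have hΦeps : ∀ y : X, ∀ g : D1space X, eps1Fun y = g.toFun → Φ g = f.toFun y := by
      intro y g hy
      apply le_antisymm
      · refine Real.iSup_le (fun z => Real.iSup_le (fun hz => ?_) (hf0 y)) (hf0 y)
        have : z = y := eps1Fun_inj (hz.trans hy.symm)
        rw [this]
      · refine le_trans ?_ (le_ciSup (bdd1 fun z =>
          Real.iSup_le (fun _ => hf1 z) zero_le_one) y)
        exact le_ciSup (bdd1 fun _ : eps1Fun y = g.toFun => hf1 y) hy
    show (⨆ g : D1space X, g.toFun x * Φ g) = f.toFun x
    apply le_antisymm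
    · refine Real.iSup_le (fun g => ?_) (hf0 x)
      by_cases hg : ∃ y, eps1Fun y = g.toFun
      · obtain ⟨y, hy⟩ := hg
        rw [hΦeps y g hy, ← hy]
        by_cases hxy : x = y
        · subst hxy; simp [eps1Fun]
        · simp [eps1Fun, hxy, hf0 x]
      · push_neg at hg
        have hΦg : Φ g ≤ 0 :=
          Real.iSup_le (fun z => Real.iSup_le (fun hz => absurd hz (hg z)) le_rfl) le_rfl
        calc g.toFun x * Φ g ≤ g.toFun x * 0 :=
              mul_le_mul_of_nonneg_left hΦg (g.memD1.2.1 x).1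
          _ ≤ f.toFun x := by rw [mul_zero]; exact hf0 x
    · set gx : D1space X := ⟨eps1Fun x, memD1_eps x⟩ with hgx
      have h1 : gx.toFun x * Φ gx = f.toFun x := by
        rw [hΦeps x gx rfl]
        show eps1Fun x x * f.toFun x = f.toFun x
        simp [eps1Fun]
      have hΦ0 : ∀ g, 0 ≤ Φ g := fun g =>
        Real.iSup_nonneg fun y => Real.iSup_nonneg fun _ => hf0 y
      calc f.toFun x = gx.toFun x * Φ gx := h1.symm
        _ ≤ ⨆ g : D1space X, g.toFun x * Φ g :=
          rle_Sup (f := fun g : D1space X => g.toFun x * Φ g)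
            (fun g => mul_le_one₀ (g.memD1.2.1 x).2 (hΦ0 g) (hΦ1 g)) gx
  · -- second unit law : κ₁X ∘ ε₁_{D₁X} = id
    intro f
    funext x
    show (⨆ g : D1space X, g.toFun x * eps1Fun f g) = f.toFun x
    apply le_antisymm
    · refine Real.iSup_le (fun g => ?_) ((f.memD1.2.1 x).1)
      by_cases hg : g = f
      · subst hg; simp [eps1Fun]
      · simp [eps1Fun, hg]
        exact (f.memD1.2.1 x).1
    · have : f.toFun x * eps1Fun f f = f.toFun x := by simp [eps1Fun]
      calc f.toFun x = f.toFun x * eps1Fun f f := this.symm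
        _ ≤ ⨆ g : D1space X, g.toFun x * eps1Fun f g := by
          refine rle_Sup (f := fun g : D1space X => g.toFun x * eps1Fun f g) (fun g => ?_) f
          by_cases hg : g = f
          · subst hg; simpa [eps1Fun] using (g.memD1.2.1 x).2
          · simp [eps1Fun, hg]
  · -- associativity
    intro G
    funext x
    set K : D1space X → ℝ := kappa1Fun (D1space X) G.toFun with hKdef
    have hG0 : ∀ F, 0 ≤ G.toFun F := fun F => (G.memD1.2.1 F).1
    have hG1 : ∀ F, G.toFun F ≤ 1 := fun F => (G.memD1.2.1 F).2
    have hterm : ∀ (f : D1space X) (F : D1space (D1space X)),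
        F.toFun f * G.toFun F ≤ 1 :=
      fun f F => mul_le_one₀ (F.memD1.2.1 f).2 (hG0 F) (hG1 F)
    have hK0 : ∀ f, 0 ≤ K f := fun f =>
      Real.iSup_nonneg fun F => mul_nonneg (F.memD1.2.1 f).1 (hG0 F)
    have hK1 : ∀ f, K f ≤ 1 := fun f => Real.iSup_le (hterm f) zero_le_one
    set Ψ : D1space X → ℝ := fun g =>
      ⨆ F ∈ {F : D1space (D1space X) | kappa1Fun X F.toFun = g.toFun}, G.toFun F with hΨdef
    have hΨ0 : ∀ g, 0 ≤ Ψ g := fun g =>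
      Real.iSup_nonneg fun F => Real.iSup_nonneg fun _ => hG0 F
    have hΨ1 : ∀ g, Ψ g ≤ 1 := fun g =>
      Real.iSup_le (fun F => Real.iSup_le (fun _ => hG1 F) zero_le_one) zero_le_one
    have hRHS0 : 0 ≤ kappa1Fun X K x :=
      Real.iSup_nonneg fun f => mul_nonneg (f.memD1.2.1 x).1 (hK0 f)
    have hLHS0 : 0 ≤ ⨆ g : D1space X, g.toFun x * Ψ g :=
      Real.iSup_nonneg fun g => mul_nonneg (g.memD1.2.1 x).1 (hΨ0 g)
    show (⨆ g : D1space X, g.toFun x * Ψ g) = kappa1Fun X K x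
    apply le_antisymm
    · refine Real.iSup_le (fun g => ?_) hRHS0
      rw [hΨdef, Real.mul_iSup_of_nonneg (g.memD1.2.1 x).1]
      refine Real.iSup_le (fun F => ?_) hRHS0
      by_cases hFg : kappa1Fun X F.toFun = g.toFun
      · rw [ciSup_pos (show F ∈ {F : D1space (D1space X) |
            kappa1Fun X F.toFun = g.toFun} from hFg)]
        have hgx : g.toFun x = ⨆ f : D1space X, f.toFun x * F.toFun f := by
          rw [← hFg]; rfl
        rw [hgx, Real.iSup_mul_of_nonneg (hG0 F)]
        refine Real.iSup_le (fun f => ?_) hRHS0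
        calc f.toFun x * F.toFun f * G.toFun F
            = f.toFun x * (F.toFun f * G.toFun F) := mul_assoc _ _ _
          _ ≤ f.toFun x * K f :=
            mul_le_mul_of_nonneg_left (rle_Sup (hterm f) F) (f.memD1.2.1 x).1
          _ ≤ kappa1Fun X K x := by
            exact rle_Sup (f := fun f' : D1space X => f'.toFun x * K f')
              (fun f' => mul_le_one₀ (f'.memD1.2.1 x).2 (hK0 f') (hK1 f')) f
      · haveI : IsEmpty (F ∈ {F : D1space (D1space X) |
            kappa1Fun X F.toFun = g.toFun}) := ⟨fun h => hFg h⟩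
        rw [Real.iSup_of_isEmpty, mul_zero]
        exact hRHS0
    · refine Real.iSup_le (fun f => ?_) hLHS0
      show f.toFun x * K f ≤ _
      rw [hKdef, show kappa1Fun (D1space X) G.toFun f
            = ⨆ F : D1space (D1space X), F.toFun f * G.toFun F from rfl,
        Real.mul_iSup_of_nonneg (f.memD1.2.1 x).1]
      refine Real.iSup_le (fun F => ?_) hLHS0
      set gF : D1space X := ⟨kappa1Fun X F.toFun, memD1_kappa _ F.memD1⟩ with hgF
      have hmem : kappa1Fun X F.toFun = gF.toFun := rfl
      have hGΨ : G.toFun F ≤ Ψ gF := by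
        refine le_trans ?_ (le_ciSup (bdd1 fun F' =>
          Real.iSup_le (fun _ => hG1 F') zero_le_one) F)
        exact le_ciSup (bdd1 fun _ : kappa1Fun X F.toFun = gF.toFun => hG1 F) hmem
      have hfF : f.toFun x * F.toFun f ≤ gF.toFun x := by
        show _ ≤ ⨆ f' : D1space X, f'.toFun x * F.toFun f'
        exact rle_Sup (fun f' => mul_le_one₀ (f'.memD1.2.1 x).2
          (F.memD1.2.1 f').1 (F.memD1.2.1 f').2) f
      calc f.toFun x * (F.toFun f * G.toFun F)
          = f.toFun x * F.toFun f * G.toFun F := (mul_assoc _ _ _).symm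
        _ ≤ gF.toFun x * G.toFun F := mul_le_mul_of_nonneg_right hfF (hG0 F)
        _ ≤ gF.toFun x * Ψ gF := mul_le_mul_of_nonneg_left hGΨ (gF.memD1.2.1 x).1
        _ ≤ ⨆ g : D1space X, g.toFun x * Ψ g :=
          rle_Sup (f := fun g : D1space X => g.toFun x * Ψ g)
            (fun g => mul_le_one₀ (g.memD1.2.1 x).2 (hΨ0 g) (hΨ1 g)) gF
end

section
/- Let X be a compactum. The maps lX : DX → D₁X, lX(f) = exp ∘ f, form a morphism of monads from (D, ε, κ) to (D₁, ε₁, κ₁): lX ∘ εX = ε₁X, and lX ∘ κX = κ₁X ∘ l_{D₁X} ∘ D(lX) as maps D(DX) → D₁X; concretely, for every F ∈ D(DX) and x ∈ X, exp(max{g(x) + F(g) : g ∈ DX}) = max{f(x) · exp(F(ln ∘ f)) : f ∈ D₁X}. -/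
open Classical in
/-- The exponential `[-∞,0] → [0,1]`, with `exp(-∞) = 0`. -/
noncomputable def myExp (a : EReal) : ℝ :=
  if a = ⊥ then 0 else Real.exp a.toReal

open Classical in
/-- The logarithm `[0,1] → [-∞,0]`, with `ln(0) = -∞`. -/
noncomputable def myLog (r : ℝ) : EReal :=
  if r ≤ 0 then ⊥ else (Real.log r : EReal)

lemma myExp_bot : myExp ⊥ = 0 := by simp [myExp]
lemma myExp_coe (r : ℝ) : myExp (r : EReal) = Real.exp r := by simp [myExp]
lemma myExp_nonneg (a : EReal) : 0 ≤ myExp a := by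
  unfold myExp; split
  · exact le_refl 0
  · exact (Real.exp_pos _).le

lemma myExp_le_one {a : EReal} (ha : a ≤ 0) : myExp a ≤ 1 := by
  induction a using EReal.rec with
  | bot => simp [myExp_bot]
  | coe r =>
      rw [myExp_coe, ← Real.exp_zero]
      exact Real.exp_le_exp.mpr (by exact_mod_cast ha)
  | top => simp at ha

lemma myExp_mono {a b : EReal} (hab : a ≤ b) (hb : b ≤ 0) : myExp a ≤ myExp b := by
  induction a using EReal.rec with
  | bot => rw [myExp_bot]; exact myExp_nonneg b
  | coe r =>
      induction b using EReal.rec with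
      | bot => simp at hab
      | coe s =>
          rw [myExp_coe, myExp_coe]
          exact Real.exp_le_exp.mpr (by exact_mod_cast hab)
      | top => simp at hb
  | top =>
      have : b = ⊤ := top_le_iff.mp hab
      simp [this] at hb

lemma myExp_add {a b : EReal} (ha : a ≤ 0) (hb : b ≤ 0) :
    myExp (a + b) = myExp a * myExp b := by
  induction a using EReal.rec with
  | bot => simp [myExp_bot]
  | coe r =>
      induction b using EReal.rec with
      | bot => simp [myExp_bot]
      | coe s =>
          rw [← EReal.coe_add, myExp_coe, myExp_coe, myExp_coe, Real.exp_add]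
      | top => simp at hb
  | top => simp at ha

lemma myExp_myLog {r : ℝ} (h0 : 0 ≤ r) : myExp (myLog r) = r := by
  unfold myLog; split
  · rw [myExp_bot]; linarith
  · rw [myExp_coe, Real.exp_log (by linarith)]

lemma myLog_myExp {a : EReal} (ha : a ≤ 0) : myLog (myExp a) = a := by
  induction a using EReal.rec with
  | bot => simp [myExp_bot, myLog]
  | coe r =>
      rw [myExp_coe]
      unfold myLog
      rw [if_neg (not_le.mpr (Real.exp_pos r)), Real.log_exp]
  | top => simp at ha

lemma myLog_lt_of_myExp_lt {a : EReal} {t : ℝ} (ha : a ≤ 0) (h : myExp a < t) :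
    a < myLog t := by
  have ht : 0 < t := lt_of_le_of_lt (myExp_nonneg a) h
  rw [myLog, if_neg (not_le.mpr ht)]
  induction a using EReal.rec with
  | bot => exact bot_lt_iff_ne_bot.mpr (by simp)
  | coe r =>
      rw [myExp_coe] at h
      exact_mod_cast (Real.lt_log_iff_exp_lt ht).mpr h
  | top => simp at ha

lemma lt_myExp_of_lt_myLog {a : EReal} {t : ℝ} (ha : a ≤ 0) (h : a < myLog t) :
    myExp a < t := by
  have ht : ¬ t ≤ 0 := by
    intro h'
    rw [myLog, if_pos h'] at h
    exact absurd h (by simp)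
  rw [myLog, if_neg ht] at h
  induction a using EReal.rec with
  | bot => rw [myExp_bot]; linarith [not_le.mp ht]
  | coe r =>
      rw [myExp_coe]
      have : r < Real.log t := by exact_mod_cast h
      calc Real.exp r < Real.exp (Real.log t) := Real.exp_lt_exp.mpr this
        _ = t := Real.exp_log (not_le.mp ht)
  | top => simp at ha

lemma lt_myExp_of_myLog_lt {r : ℝ} {a : EReal} (ha : a ≤ 0) (h : myLog r < a) :
    r < myExp a := by
  rcases le_or_gt r 0 with hr | hr
  · rcases eq_or_lt_of_le hr with hr0 | hr0
    · subst hr0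
      have hab : a ≠ ⊥ := by
        intro hb; rw [hb] at h; exact absurd h (by simp [myLog])
      rw [myExp, if_neg hab]; exact Real.exp_pos _
    · exact lt_of_lt_of_le hr0 (myExp_nonneg a)
  · rw [myLog, if_neg (not_le.mpr hr)] at h
    induction a using EReal.rec with
    | bot => exact absurd h (by simp)
    | coe s =>
        rw [myExp_coe]
        have : Real.log r < s := by exact_mod_cast h
        calc r = Real.exp (Real.log r) := (Real.exp_log hr).symm
          _ < Real.exp s := Real.exp_lt_exp.mpr this
    | top => simp at ha

lemma myLog_lt_of_lt_myExp {a : EReal} {r : ℝ} (hab : a ≠ ⊥) (h : r < myExp a) :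
    myLog r < a := by
  rcases le_or_gt r 0 with h0 | h0
  · rw [myLog, if_pos h0]; exact bot_lt_iff_ne_bot.mpr hab
  · rw [myLog, if_neg (not_le.mpr h0)]
    induction a using EReal.rec with
    | bot => exact absurd rfl hab
    | coe s =>
        rw [myExp_coe] at h
        exact_mod_cast (Real.log_lt_iff_lt_exp h0).mpr h
    | top => exact lt_top_iff_ne_top.mpr (by simp)

lemma myExp_iSup {ι : Type*} [Nonempty ι] (h : ι → EReal) (hle : ∀ i, h i ≤ 0) :
    myExp (⨆ i, h i) = ⨆ i, myExp (h i) := by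
  have hs : (⨆ i, h i) ≤ 0 := iSup_le hle
  have hbdd : BddAbove (Set.range fun i => myExp (h i)) :=
    ⟨1, by rintro _ ⟨i, rfl⟩; exact myExp_le_one (hle i)⟩
  apply le_antisymm
  · apply le_of_forall_lt
    intro r hr
    rcases eq_or_ne (⨆ i, h i) ⊥ with hbot | hbot
    · rw [hbot, myExp_bot] at hr
      obtain ⟨i⟩ := ‹Nonempty ι›
      exact lt_of_lt_of_le hr (le_trans (myExp_nonneg (h i)) (le_ciSup hbdd i))
    · have hlt : myLog r < ⨆ i, h i := myLog_lt_of_lt_myExp hbot hr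
      obtain ⟨i, hi⟩ := lt_iSup_iff.mp hlt
      exact lt_of_lt_of_le (lt_myExp_of_myLog_lt (hle i) hi) (le_ciSup hbdd i)
  · exact ciSup_le fun i => myExp_mono (le_iSup h i) hs


lemma Dspace.ext' {X : Type*} [TopologicalSpace X] {f g : Dspace X}
    (h : f.toFun = g.toFun) : f = g := by
  cases f; cases g; simp_all

lemma epsFun_usc {X : Type*} [TopologicalSpace X] [T2Space X] (x : X) :
    UpperSemicontinuous (epsFun x) := by
  intro y t ht
  rcases eq_or_ne y x with rfl | hyx
  · have h0 : epsFun y y = 0 := by simp [epsFun]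
    rw [h0] at ht
    filter_upwards with z
    rcases eq_or_ne z y with rfl | hz
    · rwa [h0]
    · calc epsFun y z = ⊥ := by simp [epsFun, hz]
        _ < t := lt_of_le_of_lt bot_le ht
  · have hb : epsFun x y = ⊥ := by simp [epsFun, hyx]
    rw [hb] at ht
    have hopen : IsOpen ({x}ᶜ : Set X) := isClosed_singleton.isOpen_compl
    filter_upwards [hopen.mem_nhds (by simpa using hyx)] with z hz
    have : epsFun x z = ⊥ := by simp [epsFun, Set.mem_compl_iff, Set.mem_singleton_iff] at hz ⊢; simp [hz]
    rw [this]; exact ht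

lemma dspace_nonempty {X : Type*} [TopologicalSpace X] [T2Space X] (x : X) :
    Nonempty (Dspace X) := by
  refine ⟨⟨epsFun x, epsFun_usc x, fun y => ?_, ⟨x, by simp [epsFun]⟩⟩⟩
  unfold epsFun; split
  · exact le_refl 0
  · exact bot_le

lemma expComp_usc {X : Type*} [TopologicalSpace X] (g : Dspace X) :
    UpperSemicontinuous (fun y => myExp (g.toFun y)) := by
  intro y t ht
  have hlt : g.toFun y < myLog t := myLog_lt_of_myExp_lt (g.memD.2.1 y) ht
  filter_upwards [g.memD.1 y (myLog t) hlt] with z hz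
  exact lt_myExp_of_lt_myLog (g.memD.2.1 z) hz

lemma P_surjective {X : Type*} [TopologicalSpace X]
    (P : D1space X → Dspace X)
    (hP : ∀ (g : D1space X) (x : X), (P g).toFun x = myLog (g.toFun x)) :
    Function.Surjective P := by
  intro g
  obtain ⟨x0, hx0⟩ := g.memD.2.2
  refine ⟨⟨fun y => myExp (g.toFun y), expComp_usc g, fun y =>
    ⟨myExp_nonneg _, myExp_le_one (g.memD.2.1 y)⟩, ⟨x0, by show myExp (g.toFun x0) = 1; rw [hx0]; simp [myExp]⟩⟩, ?_⟩
  apply Dspace.ext'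
  funext y
  rw [hP]
  exact myLog_myExp (g.memD.2.1 y)

/-- For a compactum `X`, the maps `lX : DX → D₁X`, `lX(f) = exp ∘ f`,
form a morphism of monads from `(D, ε, κ)` to `(D₁, ε₁, κ₁)`: `lX ∘ εX = ε₁X`, and
`lX ∘ κX = κ₁X ∘ l_{DX} ∘ D(lX)`; concretely, for every `F ∈ D(DX)` and `x ∈ X`,
`exp(max{g(x) + F(g) : g ∈ DX}) = max{f(x) · exp(F(ln ∘ f)) : f ∈ D₁X}`.
Here `P : D₁X → DX` is the map `P(f) = ln ∘ f` (inverse to `l`). -/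
theorem stmt14 {X : Type*} [TopologicalSpace X] [CompactSpace X] [T2Space X]
    (P : D1space X → Dspace X)
    (hP : ∀ (g : D1space X) (x : X), (P g).toFun x = myLog (g.toFun x)) :
    (∀ x y : X, myExp (epsFun x y) = eps1Fun x y) ∧
    (∀ (F : Dspace (Dspace X)) (x : X),
        myExp (kappaFun X F.toFun x) =
          ⨆ f : D1space X, f.toFun x * myExp (F.toFun (P f))) := by
  constructor
  · intro x y
    unfold epsFun eps1Fun
    split
    · simp [myExp]
    · exact myExp_bot
  · intro F x
    haveI : Nonempty (Dspace X) := dspace_nonempty x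
    have hle : ∀ g : Dspace X, g.toFun x + F.toFun g ≤ 0 :=
      fun g => add_nonpos (g.memD.2.1 x) (F.memD.2.1 g)
    have key : ∀ f : D1space X, f.toFun x * myExp (F.toFun (P f)) =
        myExp ((P f).toFun x + F.toFun (P f)) := by
      intro f
      rw [myExp_add ((P f).memD.2.1 x) (F.memD.2.1 (P f)), hP,
        myExp_myLog (f.memD1.2.1 x).1]
    calc myExp (kappaFun X F.toFun x)
        = ⨆ g : Dspace X, myExp (g.toFun x + F.toFun g) := myExp_iSup _ hle
      _ = ⨆ f : D1space X, myExp ((P f).toFun x + F.toFun (P f)) := by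
          rw [iSup, iSup, ← Function.Surjective.range_comp (P_surjective P hP)
            (fun g : Dspace X => myExp (g.toFun x + F.toFun g))]
          rfl
      _ = ⨆ f : D1space X, f.toFun x * myExp (F.toFun (P f)) := by
          simp_rw [key]
end

section
/- Let X be a compactum, let c be a possibility capacity on X, and let φ ∈ C(X). Then, computed in ℝ ∪ {-∞} with ln(0) = -∞, the supremum over x ∈ X of φ(x) + ln(c({x})) equals the supremum over t ∈ ℝ of ln(c(φ_t)) + t, and both suprema are attained. -/
/-! A possibility capacity on a compactum is controlled by its values at points: if `c {x} < a` for
every `x` in a closed set `F`, then upper semicontinuity and regularity give each point of `F` a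
closed neighbourhood of capacity `< a`, and compactness with maxitivity gives `c F < a`. So `c φ_t`
is at most `c {x}` for some `x ∈ φ_t`, which bounds `ln c(φ_t) + t` by `φ x + ln c {x}`; conversely
`φ x + ln c {x} ≤ ln c(φ_{φ x}) + φ x` by monotonicity. Finally `x ↦ φ x + ln c {x}` is upper
semicontinuous, hence attains its supremum at some `x₀`, and `t₀ = φ x₀` attains the other one. -/

/-- An (upper-semicontinuous) capacity on a compactum `X`: a `[0,1]`-valued,
monotone, normalized set function on closed sets, upper semicontinuous in the
sense that if `ν(F) < a` then there is an open `O ⊇ F` with `ν(B) < a` for every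
closed `B ⊆ O`. -/
def IsCapacity {X : Type*} [TopologicalSpace X] (ν : Set X → ℝ) : Prop :=
  ν Set.univ = 1 ∧ ν ∅ = 0 ∧
  (∀ F : Set X, IsClosed F → 0 ≤ ν F ∧ ν F ≤ 1) ∧
  (∀ F G : Set X, IsClosed F → IsClosed G → F ⊆ G → ν F ≤ ν G) ∧
  (∀ (F : Set X) (a : ℝ), IsClosed F → ν F < a →
    ∃ O : Set X, IsOpen O ∧ F ⊆ O ∧ ∀ B : Set X, IsClosed B → B ⊆ O → ν B < a)

/-- A possibility capacity: a capacity with `ν(A ∪ B) = max(ν(A), ν(B))`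
for all closed `A`, `B`. -/
def IsPossibilityCapacity {X : Type*} [TopologicalSpace X] (ν : Set X → ℝ) : Prop :=
  IsCapacity ν ∧
  ∀ A B : Set X, IsClosed A → IsClosed B → ν (A ∪ B) = max (ν A) (ν B)
lemma myLog_eq_log_comp_ofReal : myLog = ENNReal.log ∘ ENNReal.ofReal := by
  ext r
  rw [Function.comp_apply, ENNReal.log_ofReal, myLog]

lemma continuous_myLog : Continuous myLog :=
  myLog_eq_log_comp_ofReal ▸ ENNReal.continuous_log.comp ENNReal.continuous_ofReal

lemma myLog_monotone : Monotone myLog :=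
  myLog_eq_log_comp_ofReal ▸ ENNReal.log_monotone.comp ENNReal.ofReal_mono

lemma myLog_of_nonpos {r : ℝ} (hr : r ≤ 0) : myLog r = ⊥ := if_pos hr

lemma upperSemicontinuous_coe_add_myLog {X : Type*} [TopologicalSpace X] {f g : X → ℝ}
    (hf : Continuous f) (hg : UpperSemicontinuous g) :
    UpperSemicontinuous fun x => (f x : EReal) + myLog (g x) :=
  (continuous_coe_real_ereal.comp hf).upperSemicontinuous.add'
    (continuous_myLog.comp_upperSemicontinuous hg myLog_monotone)
    fun _ => EReal.continuousAt_add (Or.inl (EReal.coe_ne_top _)) (Or.inl (EReal.coe_ne_bot _))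

section Capacity

variable {X : Type*} [TopologicalSpace X] {ν : Set X → ℝ}

lemma IsCapacity.upperSemicontinuous_singleton [T1Space X] (hν : IsCapacity ν) :
    UpperSemicontinuous fun x => ν {x} := by
  intro x a hx
  obtain ⟨O, hO, hxO, hlt⟩ := hν.2.2.2.2 {x} a isClosed_singleton hx
  filter_upwards [hO.mem_nhds (hxO rfl)] with y hy
  exact hlt {y} isClosed_singleton (Set.singleton_subset_iff.mpr hy)

namespace IsPossibilityCapacity

lemma lt_of_forall_singleton_lt [T1Space X] [RegularSpace X] (hν : IsPossibilityCapacity ν)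
    {F : Set X} (hF : IsCompact F) (hFc : IsClosed F) {a : ℝ} (ha : 0 < a)
    (h : ∀ x ∈ F, ν {x} < a) : ν F < a := by
  rw [← hFc.closure_eq]
  refine hF.induction_on (p := fun S => ν (closure S) < a) ?_ ?_ ?_ ?_
  · simpa [hν.1.2.1] using ha
  · intro S T hST hT
    exact (hν.1.2.2.2.1 _ _ isClosed_closure isClosed_closure (closure_mono hST)).trans_lt hT
  · intro S T hS hT
    simpa only [closure_union, hν.2 _ _ isClosed_closure isClosed_closure] using max_lt hS hT
  · intro x hx
    obtain ⟨O, hO, hxO, hlt⟩ := hν.1.2.2.2.2 {x} a isClosed_singleton (h x hx)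
    obtain ⟨N, hN, hNc, hNO⟩ := exists_mem_nhds_isClosed_subset (hO.mem_nhds (hxO rfl))
    exact ⟨N, mem_nhdsWithin_of_mem_nhds hN, hlt _ isClosed_closure (by rwa [hNc.closure_eq])⟩

lemma exists_le_singleton [T1Space X] [RegularSpace X] (hν : IsPossibilityCapacity ν)
    {F : Set X} (hF : IsCompact F) (hFc : IsClosed F) (hpos : 0 < ν F) :
    ∃ x ∈ F, ν F ≤ ν {x} := by
  by_contra! h
  exact (hν.lt_of_forall_singleton_lt hF hFc hpos h).false

end IsPossibilityCapacity

lemma IsCapacity.nonempty (hν : IsCapacity ν) : Nonempty X := by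
  by_contra h
  rw [not_nonempty_iff] at h
  simpa [Set.univ_eq_empty_iff.mpr h, hν.2.1] using hν.1

section Superlevel

variable {c : Set X → ℝ} (φ : C(X, ℝ))

lemma isClosed_superlevel (t : ℝ) : IsClosed {y | t ≤ φ y} :=
  isClosed_le continuous_const φ.continuous

lemma coe_add_myLog_le_superlevel [T1Space X] (hc : IsCapacity c) (x : X) :
    (φ x : EReal) + myLog (c {x}) ≤ myLog (c {y | φ x ≤ φ y}) + (φ x : EReal) := by
  rw [add_comm]
  gcongr
  exact myLog_monotone (hc.2.2.2.1 _ _ isClosed_singleton (isClosed_superlevel φ _) (by simp))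

lemma exists_superlevel_le_coe_add_myLog [CompactSpace X] [T1Space X] [RegularSpace X]
    (hc : IsPossibilityCapacity c) (t : ℝ) :
    ∃ x, myLog (c {y | t ≤ φ y}) + (t : EReal) ≤ (φ x : EReal) + myLog (c {x}) := by
  rcases le_or_gt (c {y | t ≤ φ y}) 0 with hzero | hpos
  · have := hc.1.nonempty
    exact ⟨Classical.arbitrary X, by simp [myLog_of_nonpos hzero]⟩
  have hF := isClosed_superlevel φ t
  obtain ⟨x, hx, hle⟩ := hc.exists_le_singleton hF.isCompact hF hpos
  refine ⟨x, ?_⟩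
  rw [add_comm]
  exact add_le_add (EReal.coe_le_coe_iff.mpr hx) (myLog_monotone hle)

lemma exists_forall_coe_add_myLog_le [CompactSpace X] [T1Space X] (hc : IsCapacity c) :
    ∃ x₀, ∀ x, (φ x : EReal) + myLog (c {x}) ≤ (φ x₀ : EReal) + myLog (c {x₀}) := by
  have := hc.nonempty
  obtain ⟨x₀, -, hx₀⟩ := ((upperSemicontinuous_coe_add_myLog φ.continuous
    hc.upperSemicontinuous_singleton).upperSemicontinuousOn Set.univ).exists_isMaxOn
      Set.univ_nonempty isCompact_univ
  exact ⟨x₀, fun x => hx₀ (Set.mem_univ x)⟩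

end Superlevel

end Capacity

/-- Let `X` be a compactum, `c` a possibility capacity on `X`, and
`φ ∈ C(X)`.  Then, computed in `ℝ ∪ {-∞}` with `ln(0) = -∞`,
`sup_{x ∈ X} (φ(x) + ln c({x})) = sup_{t ∈ ℝ} (ln c(φ_t) + t)`, where
`φ_t = {x : φ(x) ≥ t}`, and both suprema are attained. -/
theorem stmt15 {X : Type*} [TopologicalSpace X] [CompactSpace X] [T2Space X]
    (c : Set X → ℝ) (hc : IsPossibilityCapacity c) (φ : C(X, ℝ)) :
    (⨆ x : X, ((φ x : EReal) + myLog (c {x}))) =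
      (⨆ t : ℝ, (myLog (c {y | t ≤ φ y}) + (t : EReal))) ∧
    (∃ x₀ : X, (⨆ x : X, ((φ x : EReal) + myLog (c {x}))) =
        (φ x₀ : EReal) + myLog (c {x₀})) ∧
    (∃ t₀ : ℝ, (⨆ t : ℝ, (myLog (c {y | t ≤ φ y}) + (t : EReal))) =
        myLog (c {y | t₀ ≤ φ y}) + (t₀ : EReal)) := by
  obtain ⟨x₀, hx₀⟩ := exists_forall_coe_add_myLog_le φ hc.1
  have hle_max (t : ℝ) :
      myLog (c {y | t ≤ φ y}) + (t : EReal) ≤ (φ x₀ : EReal) + myLog (c {x₀}) :=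
    (exists_superlevel_le_coe_add_myLog φ hc t).elim fun x hx => hx.trans (hx₀ x)
  have hmax_eq : (φ x₀ : EReal) + myLog (c {x₀}) =
      myLog (c {y | φ x₀ ≤ φ y}) + (φ x₀ : EReal) :=
    le_antisymm (coe_add_myLog_le_superlevel φ hc.1 x₀) (hle_max _)
  have hsup_x : (⨆ x : X, ((φ x : EReal) + myLog (c {x}))) = (φ x₀ : EReal) + myLog (c {x₀}) :=
    le_antisymm (iSup_le hx₀) (le_iSup_of_le x₀ le_rfl)
  have hsup_t : (⨆ t : ℝ, (myLog (c {y | t ≤ φ y}) + (t : EReal))) =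
      myLog (c {y | φ x₀ ≤ φ y}) + (φ x₀ : EReal) :=
    le_antisymm (iSup_le fun t => hmax_eq ▸ hle_max t) (le_iSup_of_le (φ x₀) le_rfl)
  exact ⟨hsup_x.trans (hmax_eq.trans hsup_t.symm), ⟨x₀, hsup_x⟩, ⟨φ x₀, hsup_t⟩⟩
end
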